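/- arXiv:1508.07914 — 9 statements merged into one kernel-verified Lean document; each statement's English description precedes it below -/
import Mathlib

section
/- For every constant C > 1 there exists a function γ : (0,∞) → [0,∞) with γ(ε) → 0 as ε → 0 such that the following holds: for every ε > 0, every σ ∈ [1/C, C], and every pair of real random variables ξ, η defined on a common probability space such that the law of η is the Gaussian measure N(0, σ²) and E[(ξ − η)²] ≤ ε, one has (|p| ∨ 1) · |P(ξ > p) − P(η > p)| ≤ γ(ε) for every p ∈ ℝ. -/
/-!
Write `a = P(ξ > p)` and `g t = P(η > t)`. Outside an event of probability at most `ε / δ²`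
(Chebyshev) the variables `ξ` and `η` are `δ`-close, so
`g (p + δ) - ε / δ² ≤ a ≤ g (p - δ) + ε / δ²`; as the Gaussian density is at most `C`, this gives
`|a - g p| ≤ C δ + ε / δ²`, good for `|p| ≤ M`. For `|p| > M`, `a` and `g p` (or their
complements) are both controlled by the Chernoff tail `P(|η| ≥ |p| / 2) ≤ 2 exp (-p² / (8 C²))`
plus `4 ε / p²`, and `|p| exp (-p² / (8 C²)) = O(1 / |p|)`. With `ε = r⁶`, `δ = r²` and
`M = 1 + 1 / r` both regimes cost `O(r)`.
-/

open MeasureTheory ProbabilityTheory Filter Set Real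
open scoped NNReal ENNReal Topology

lemma gaussianPDFReal_le_inv_sqrt (μ : ℝ) (v : ℝ≥0) (x : ℝ) :
    gaussianPDFReal μ v x ≤ (√(2 * π * v))⁻¹ := by
  refine mul_le_of_le_one_right (by positivity) (exp_le_one_iff.2 ?_)
  exact div_nonpos_of_nonpos_of_nonneg (neg_nonpos.2 (sq_nonneg _)) (by positivity)

lemma measureReal_gaussianReal_Ioc_le (μ : ℝ) {v : ℝ≥0} (hv : v ≠ 0) {s t : ℝ} (hst : s ≤ t) :
    (gaussianReal μ v).real (Ioc s t) ≤ (√(2 * π * v))⁻¹ * (t - s) := by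
  rw [measureReal_def, gaussianReal_apply_eq_integral μ hv, ENNReal.toReal_ofReal
    (setIntegral_nonneg measurableSet_Ioc fun x _ ↦ gaussianPDFReal_nonneg μ v x)]
  have hnorm := norm_setIntegral_le_of_norm_le_const (μ := volume) (s := Ioc s t)
    (f := gaussianPDFReal μ v)
    (C := (√(2 * π * v))⁻¹) measure_Ioc_lt_top fun x _ ↦ by
      rw [Real.norm_of_nonneg (gaussianPDFReal_nonneg μ v x)]
      exact gaussianPDFReal_le_inv_sqrt μ v x
  rw [Real.volume_real_Ioc_of_le hst] at hnorm
  exact (le_abs_self _).trans hnorm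

lemma hasSubgaussianMGF_of_map_eq_gaussianReal {Ω : Type*} [MeasurableSpace Ω] {P : Measure Ω}
    {η : Ω → ℝ} (hη : AEMeasurable η P) {v : ℝ≥0} (h : P.map η = gaussianReal 0 v) :
    HasSubgaussianMGF η v P := by
  rw [← HasSubgaussianMGF.id_map_iff hη, h]
  exact ⟨integrable_exp_mul_gaussianReal, fun t ↦ by simp [mgf_id_gaussianReal]⟩

lemma ProbabilityTheory.HasSubgaussianMGF.measure_abs_ge_le {Ω : Type*} [MeasurableSpace Ω]
    {P : Measure Ω} {η : Ω → ℝ} {v : ℝ≥0} (h : HasSubgaussianMGF η v P) {t : ℝ} (ht : 0 ≤ t) :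
    P.real {ω | t ≤ |η ω|} ≤ 2 * exp (-t ^ 2 / (2 * v)) := by
  have hsplit : {ω | t ≤ |η ω|} = {ω | t ≤ η ω} ∪ {ω | t ≤ (-η) ω} := by
    ext ω; simp [le_abs]
  calc P.real {ω | t ≤ |η ω|} ≤ P.real {ω | t ≤ η ω} + P.real {ω | t ≤ (-η) ω} := by
        rw [hsplit]; exact measureReal_union_le _ _
    _ ≤ _ := by linarith [h.measure_ge_le ht, h.neg.measure_ge_le ht]

section

variable {Ω : Type*} [MeasurableSpace Ω] {P : Measure Ω} {ξ η : Ω → ℝ}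

lemma measureReal_abs_sub_ge_le_div_sq (hξ : Measurable ξ) (hη : Measurable η) {ε δ : ℝ}
    (hε : 0 ≤ ε) (hδ : 0 < δ)
    (hmom : ∫⁻ ω, ENNReal.ofReal ((ξ ω - η ω) ^ 2) ∂P ≤ ENNReal.ofReal ε) :
    P.real {ω | δ ≤ |ξ ω - η ω|} ≤ ε / δ ^ 2 := by
  have hsub : {ω | δ ≤ |ξ ω - η ω|} ⊆
      {ω | ENNReal.ofReal (δ ^ 2) ≤ ENNReal.ofReal ((ξ ω - η ω) ^ 2)} := fun ω hω ↦
    ENNReal.ofReal_le_ofReal (by rw [← sq_abs (ξ ω - η ω)]; gcongr; exact hω)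
  refine ENNReal.toReal_le_of_le_ofReal (by positivity) ?_
  calc P {ω | δ ≤ |ξ ω - η ω|}
      ≤ (∫⁻ ω, ENNReal.ofReal ((ξ ω - η ω) ^ 2) ∂P) / ENNReal.ofReal (δ ^ 2) :=
        (measure_mono hsub).trans
          (meas_ge_le_lintegral_div (by fun_prop) (by simp; positivity) (by simp))
    _ ≤ ENNReal.ofReal ε / ENNReal.ofReal (δ ^ 2) := by gcongr
    _ = ENNReal.ofReal (ε / δ ^ 2) := (ENNReal.ofReal_div_of_pos (by positivity)).symm

variable [IsFiniteMeasure P]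

lemma measureReal_preimage_le_add_of_close {s t : Set ℝ} {δ : ℝ}
    (hst : ∀ x y, x ∈ s → |x - y| < δ → y ∈ t) :
    P.real (ξ ⁻¹' s) ≤ P.real (η ⁻¹' t) + P.real {ω | δ ≤ |ξ ω - η ω|} := by
  have hsub : ξ ⁻¹' s ⊆ η ⁻¹' t ∪ {ω | δ ≤ |ξ ω - η ω|} := fun ω hω ↦ by
    by_cases hclose : |ξ ω - η ω| < δ
    · exact Or.inl (hst _ _ hω hclose)
    · exact Or.inr (not_lt.1 hclose)
  exact (measureReal_mono hsub).trans (measureReal_union_le _ _)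

lemma abs_measureReal_Ioi_sub_le_of_density {D δ : ℝ}
    (hD : ∀ s t, s ≤ t → P.real (η ⁻¹' Ioc s t) ≤ D * (t - s)) (hδ : 0 ≤ δ) (p : ℝ) :
    |P.real (ξ ⁻¹' Ioi p) - P.real (η ⁻¹' Ioi p)| ≤ D * δ + P.real {ω | δ ≤ |ξ ω - η ω|} := by
  have hstep : ∀ s t, s ≤ t → P.real (η ⁻¹' Ioi s) ≤ D * (t - s) + P.real (η ⁻¹' Ioi t) :=
    fun s t hst ↦ by
      rw [← Ioc_union_Ioi_eq_Ioi hst, preimage_union]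
      exact (measureReal_union_le _ _).trans (by gcongr; exact hD s t hst)
  have hleft :
      P.real (ξ ⁻¹' Ioi p) ≤ P.real (η ⁻¹' Ioi (p - δ)) + P.real {ω | δ ≤ |ξ ω - η ω|} :=
    measureReal_preimage_le_add_of_close fun x y (hx : p < x) hxy ↦ by
      show p - δ < y
      linarith [(abs_lt.1 hxy).2]
  have hright :
      P.real (η ⁻¹' Ioi (p + δ)) ≤ P.real (ξ ⁻¹' Ioi p) + P.real {ω | δ ≤ |ξ ω - η ω|} := by
    simp_rw [abs_sub_comm (ξ _)]
    exact measureReal_preimage_le_add_of_close fun x y (hx : p + δ < x) hxy ↦ by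
      show p < y
      linarith [(abs_lt.1 hxy).2]
  have h₁ := hstep (p - δ) p (by linarith)
  have h₂ := hstep p (p + δ) (by linarith)
  rw [abs_le]
  constructor <;> linarith

lemma abs_measureReal_preimage_sub_le_of_close {s u : Set ℝ} {δ : ℝ}
    (hsu : ∀ x y, x ∈ s → |x - y| < δ → y ∈ u) (hs : s ⊆ u) :
    |P.real (ξ ⁻¹' s) - P.real (η ⁻¹' s)| ≤
      2 * P.real (η ⁻¹' u) + P.real {ω | δ ≤ |ξ ω - η ω|} := by
  have hξ : P.real (ξ ⁻¹' s) ≤ P.real (η ⁻¹' u) + P.real {ω | δ ≤ |ξ ω - η ω|} :=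
    measureReal_preimage_le_add_of_close hsu
  have hη : P.real (η ⁻¹' s) ≤ P.real (η ⁻¹' u) := measureReal_mono (preimage_mono hs)
  rw [abs_le]
  constructor <;> linarith [measureReal_nonneg (μ := P) (s := ξ ⁻¹' s),
    measureReal_nonneg (μ := P) (s := η ⁻¹' s)]

lemma abs_measureReal_Ioi_sub_le_of_ne_zero (hξ : Measurable ξ) (hη : Measurable η) {p : ℝ}
    (hp : p ≠ 0) :
    |P.real (ξ ⁻¹' Ioi p) - P.real (η ⁻¹' Ioi p)| ≤
      2 * P.real {ω | |p| / 2 ≤ |η ω|} + P.real {ω | |p| / 2 ≤ |ξ ω - η ω|} := by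
  rcases hp.lt_or_gt with hp | hp
  · have hIic : |P.real (ξ ⁻¹' Ioi p) - P.real (η ⁻¹' Ioi p)| =
        |P.real (ξ ⁻¹' Iic p) - P.real (η ⁻¹' Iic p)| := by
      simp only [← compl_Iic, preimage_compl, measureReal_compl (hξ measurableSet_Iic),
        measureReal_compl (hη measurableSet_Iic), sub_sub_sub_cancel_left, abs_sub_comm]
    rw [hIic, abs_of_neg hp]
    refine abs_measureReal_preimage_sub_le_of_close (u := {y | -p / 2 ≤ |y|})
      (fun x y (hx : x ≤ p) hxy ↦ ?_) fun x (hx : x ≤ p) ↦ ?_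
    · exact (by linarith [(abs_lt.1 hxy).1] : -p / 2 ≤ -y).trans (neg_le_abs y)
    · exact (by linarith : -p / 2 ≤ -x).trans (neg_le_abs x)
  · rw [abs_of_pos hp]
    refine abs_measureReal_preimage_sub_le_of_close (u := {y | p / 2 ≤ |y|})
      (fun x y (hx : p < x) hxy ↦ ?_) fun x (hx : p < x) ↦ ?_
    · exact (by linarith [(abs_lt.1 hxy).2] : p / 2 ≤ y).trans (le_abs_self y)
    · exact (by linarith : p / 2 ≤ x).trans (le_abs_self x)

end

lemma mul_exp_neg_sq_div_le {k x : ℝ} (hk : 0 < k) (hx : 0 < x) :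
    x * exp (-x ^ 2 / k) ≤ k / x := by
  have h : x ^ 2 / k ≤ exp (x ^ 2 / k) := by linarith [add_one_le_exp (x ^ 2 / k)]
  rw [neg_div, exp_neg, ← div_eq_mul_inv, div_le_div_iff₀ (exp_pos _) hx]
  calc x * x = k * (x ^ 2 / k) := by field_simp
    _ ≤ k * exp (x ^ 2 / k) := by gcongr

/-- The worse of the two regimes `|p| ≤ 1 + 1 / r` and `|p| > 1 + 1 / r`, for a density bound `D`,
a tail bound `2 exp (-t² / k)` and `ε = r⁶`. -/
def gapproxRate (D k r : ℝ) : ℝ := max ((D + 1) * (r ^ 2 + r)) ((16 * k + 4 * r ^ 6) * r)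

lemma tendsto_gapproxRate (D k : ℝ) :
    Tendsto (fun ε : ℝ ↦ gapproxRate D k (ε ^ (6⁻¹ : ℝ))) (𝓝[>] 0) (𝓝 0) := by
  have hrate : Tendsto (gapproxRate D k) (𝓝 0) (𝓝 0) := by
    have : Continuous (gapproxRate D k) := by unfold gapproxRate; fun_prop
    simpa [gapproxRate] using this.tendsto 0
  refine hrate.comp (tendsto_nhdsWithin_of_tendsto_nhds ?_)
  simpa using (continuous_id.rpow_const fun _ ↦ Or.inr (by norm_num : (0:ℝ) ≤ 6⁻¹)).tendsto 0

lemma max_abs_one_mul_abs_measureReal_Ioi_sub_le {Ω : Type*} [MeasurableSpace Ω]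
    {P : Measure Ω} [IsFiniteMeasure P] {ξ η : Ω → ℝ} (hξ : Measurable ξ) (hη : Measurable η)
    {D k r : ℝ} (hk : 0 < k) (hr : 0 < r)
    (hD : ∀ s t, s ≤ t → P.real (η ⁻¹' Ioc s t) ≤ D * (t - s))
    (htail : ∀ t, 0 ≤ t → P.real {ω | t ≤ |η ω|} ≤ 2 * exp (-t ^ 2 / k))
    (hcheb : ∀ δ, 0 < δ → P.real {ω | δ ≤ |ξ ω - η ω|} ≤ r ^ 6 / δ ^ 2) (p : ℝ) :
    max |p| 1 * |P.real (ξ ⁻¹' Ioi p) - P.real (η ⁻¹' Ioi p)| ≤ gapproxRate D k r := by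
  rcases le_or_gt |p| (1 + r⁻¹) with hpM | hpM
  · have hclose := abs_measureReal_Ioi_sub_le_of_density hD (sq_nonneg r) p (ξ := ξ)
    have hmr := hcheb (r ^ 2) (by positivity)
    calc max |p| 1 * |P.real (ξ ⁻¹' Ioi p) - P.real (η ⁻¹' Ioi p)|
        ≤ (1 + r⁻¹) * (D * r ^ 2 + r ^ 6 / (r ^ 2) ^ 2) := by
          gcongr
          · exact max_le hpM (le_add_of_nonneg_right (inv_nonneg.2 hr.le))
          · linarith
      _ = (D + 1) * (r ^ 2 + r) := by field_simp
      _ ≤ gapproxRate D k r := le_max_left _ _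
  · have hp1 : 1 < |p| := (lt_add_of_pos_right 1 (inv_pos.2 hr)).trans hpM
    have hp : 0 < |p| := one_pos.trans hp1
    have hrp : |p|⁻¹ < r := by
      rw [inv_lt_comm₀ hp hr]; linarith
    have hfar := abs_measureReal_Ioi_sub_le_of_ne_zero (P := P) hξ hη (abs_pos.1 hp)
    have hexp := mul_exp_neg_sq_div_le hk (half_pos hp)
    calc max |p| 1 * |P.real (ξ ⁻¹' Ioi p) - P.real (η ⁻¹' Ioi p)|
        ≤ |p| * (2 * (2 * exp (-(|p| / 2) ^ 2 / k)) + r ^ 6 / (|p| / 2) ^ 2) := by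
          rw [max_eq_left hp1.le]
          gcongr
          linarith [htail (|p| / 2) (by positivity), hcheb (|p| / 2) (by positivity)]
      _ = 8 * (|p| / 2 * exp (-(|p| / 2) ^ 2 / k)) + 4 * r ^ 6 * |p|⁻¹ := by field_simp; ring
      _ ≤ 8 * (k / (|p| / 2)) + 4 * r ^ 6 * |p|⁻¹ := by gcongr
      _ = (16 * k + 4 * r ^ 6) * |p|⁻¹ := by field_simp; ring
      _ ≤ (16 * k + 4 * r ^ 6) * r := by gcongr
      _ ≤ gapproxRate D k r := le_max_right _ _

/-- Part (i) of the paper's Lemma 8.2 (`gapprox`): for every `C > 1` there is a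
function `γ` vanishing at `0⁺` such that for all `ε > 0`, all `σ ∈ [1/C, C]`, and all
random variables `ξ, η` on a common probability space with `η ~ N(0, σ²)` and
`E[(ξ − η)²] ≤ ε`, one has `(|p| ∨ 1) * |P(ξ > p) − P(η > p)| ≤ γ ε` for all `p`. -/
theorem stmt0 (C : ℝ) (hC : 1 < C) :
    ∃ γ : ℝ → ℝ,
      (∀ ε > (0 : ℝ), 0 ≤ γ ε) ∧
      Tendsto γ (nhdsWithin 0 (Ioi 0)) (nhds 0) ∧
      ∀ (ε : ℝ), 0 < ε →
      ∀ (σ : ℝ), σ ∈ Icc (1 / C) C →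
      ∀ (Ω : Type) [MeasurableSpace Ω] (P : Measure Ω), IsProbabilityMeasure P →
      ∀ (ξ η : Ω → ℝ), Measurable ξ → Measurable η →
        Measure.map η P = gaussianReal 0 ((σ ^ 2).toNNReal) →
        (∫⁻ ω, ENNReal.ofReal ((ξ ω - η ω) ^ 2) ∂P) ≤ ENNReal.ofReal ε →
        ∀ p : ℝ,
          max |p| 1 * |(P {ω | ξ ω > p}).toReal - (P {ω | η ω > p}).toReal| ≤ γ ε := by
  have hC₀ : 0 < C := one_pos.trans hC
  refine ⟨fun ε ↦ gapproxRate C (2 * C ^ 2) (ε ^ (6⁻¹ : ℝ)),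
    fun ε hε ↦ le_max_of_le_right (by positivity), tendsto_gapproxRate _ _, ?_⟩
  intro ε hε σ ⟨hCσ, hσC⟩ Ω _ P _ ξ η hξ hη hmap hmom p
  have hσ₀ : 0 < σ := (one_div_pos.2 hC₀).trans_le hCσ
  set v := (σ ^ 2).toNNReal
  have hv : (v : ℝ) = σ ^ 2 := Real.coe_toNNReal _ (sq_nonneg σ)
  have hv₀ : v ≠ 0 := by rw [← NNReal.coe_ne_zero, hv]; positivity
  have hr6 : (ε ^ (6⁻¹ : ℝ)) ^ 6 = ε := by
    exact_mod_cast rpow_inv_natCast_pow hε.le (n := 6) (by norm_num)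
  have hdens : (√(2 * π * v))⁻¹ ≤ C := by
    rw [inv_le_comm₀ (sqrt_pos.2 (by rw [hv]; positivity)) hC₀, ← one_div]
    calc 1 / C ≤ σ := hCσ
      _ = √(σ ^ 2) := (sqrt_sq hσ₀.le).symm
      _ ≤ √(2 * π * v) := by rw [hv]; gcongr; nlinarith [pi_gt_three, sq_nonneg σ]
  refine max_abs_one_mul_abs_measureReal_Ioi_sub_le hξ hη (by positivity) (by positivity)
    (fun s t hst ↦ ?_) (fun t ht ↦ ?_) (fun δ hδ ↦ ?_) p
  · rw [← map_measureReal_apply hη measurableSet_Ioc, hmap]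
    exact (measureReal_gaussianReal_Ioc_le 0 hv₀ hst).trans
      (mul_le_mul_of_nonneg_right hdens (sub_nonneg.2 hst))
  · have hsub := hasSubgaussianMGF_of_map_eq_gaussianReal hη.aemeasurable hmap
    refine (hsub.measure_abs_ge_le ht).trans ?_
    rw [neg_div, neg_div]
    gcongr
    rw [hv]
    exact pow_le_pow_left₀ hσ₀.le hσC 2
  · rw [hr6]; exact measureReal_abs_sub_ge_le_div_sq hξ hη hε.le hδ hmom
end

section
/- Let ξ and η be real random variables on a common probability space, suppose the law of η is absolutely continuous with respect to Lebesgue measure with density bounded above by a constant M > 0, and suppose E[(ξ − η)²] ≤ ε for some ε > 0. Then for every p ∈ ℝ: P(ξ > p, η ≤ p) ≤ (M + 1) · ε^{1/3}, and likewise P(ξ ≤ p, η > p) ≤ (M + 1) · ε^{1/3}. -/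
open MeasureTheory ProbabilityTheory Filter Set

open scoped ENNReal

/-! If `ξ` crosses the level `p` while `η` does not, then either `|ξ - η| ≥ δ`, which by Chebyshev
has probability at most `ε / δ²`, or `η` lies in an interval of length `δ` next to `p`, which by
the density bound has probability at most `M δ`. The choice `δ = ε^{1/3}` balances the two terms. -/

lemma le_abs_sub_or_mem_Ioc_of_le_of_lt {x y p : ℝ} (δ : ℝ) (hy : y ≤ p) (hx : p < x) :
    δ ≤ |x - y| ∨ y ∈ Ioc (p - δ) p := by
  by_cases h : p - δ < y
  · exact Or.inr ⟨h, hy⟩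
  · exact Or.inl ((by linarith : δ ≤ x - y).trans (le_abs_self _))

lemma le_abs_sub_or_mem_Ioc_of_lt_of_le {x y p : ℝ} (δ : ℝ) (hx : x ≤ p) (hy : p < y) :
    δ ≤ |x - y| ∨ y ∈ Ioc p (p + δ) := by
  by_cases h : y ≤ p + δ
  · exact Or.inr ⟨hy, h⟩
  · exact Or.inl ((by linarith : δ ≤ -(x - y)).trans (neg_le_abs _))

section

variable {Ω : Type*} [MeasurableSpace Ω] {P : Measure Ω}

lemma measure_preimage_le_of_density_le {η : Ω → ℝ} (hη : Measurable η) {f : ℝ → ℝ≥0∞}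
    {M : ℝ≥0∞} (hf : P.map η = volume.withDensity f) (hfM : ∀ᵐ x ∂volume, f x ≤ M)
    {s : Set ℝ} (hs : MeasurableSet s) :
    P (η ⁻¹' s) ≤ M * volume s := by
  rw [← Measure.map_apply hη hs, hf, withDensity_apply _ hs]
  calc ∫⁻ x in s, f x ∂volume ≤ ∫⁻ _ in s, M ∂volume := lintegral_mono_ae (ae_restrict_of_ae hfM)
    _ = M * volume s := by rw [setLIntegral_const]

lemma measure_le_abs_le_of_lintegral_sq_le {X : Ω → ℝ} (hX : AEMeasurable X P) {ε δ : ℝ}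
    (hδ : 0 < δ) (hL2 : ∫⁻ ω, ENNReal.ofReal (X ω ^ 2) ∂P ≤ ENNReal.ofReal ε) :
    P {ω | δ ≤ |X ω|} ≤ ENNReal.ofReal (ε / δ ^ 2) := by
  have hδ2 : 0 < δ ^ 2 := by positivity
  have hsub : {ω | δ ≤ |X ω|} ⊆ {ω | ENNReal.ofReal (δ ^ 2) ≤ ENNReal.ofReal (X ω ^ 2)} :=
    fun ω hω => ENNReal.ofReal_le_ofReal (sq_abs (X ω) ▸ pow_le_pow_left₀ hδ.le hω 2)
  calc P {ω | δ ≤ |X ω|}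
      ≤ (∫⁻ ω, ENNReal.ofReal (X ω ^ 2) ∂P) / ENNReal.ofReal (δ ^ 2) :=
        (measure_mono hsub).trans <| meas_ge_le_lintegral_div
          (ENNReal.measurable_ofReal.comp_aemeasurable (hX.pow_const 2))
          (ENNReal.ofReal_pos.2 hδ2).ne' ENNReal.ofReal_ne_top
    _ ≤ ENNReal.ofReal ε / ENNReal.ofReal (δ ^ 2) := by gcongr
    _ = ENNReal.ofReal (ε / δ ^ 2) := (ENNReal.ofReal_div_of_pos hδ2).symm

lemma measure_le_of_subset_le_abs_sub_union_Ioc {ξ η : Ω → ℝ} (hξ : Measurable ξ)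
    (hη : Measurable η) {f : ℝ → ℝ≥0∞} {M : ℝ≥0∞} (hf : P.map η = volume.withDensity f)
    (hfM : ∀ᵐ x ∂volume, f x ≤ M) {ε δ : ℝ} (hδ : 0 < δ)
    (hL2 : ∫⁻ ω, ENNReal.ofReal ((ξ ω - η ω) ^ 2) ∂P ≤ ENNReal.ofReal ε) {S : Set Ω} {a b : ℝ}
    (hab : b - a = δ) (hS : S ⊆ {ω | δ ≤ |ξ ω - η ω|} ∪ η ⁻¹' Ioc a b) :
    P S ≤ ENNReal.ofReal (ε / δ ^ 2) + M * ENNReal.ofReal δ :=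
  calc P S ≤ P {ω | δ ≤ |ξ ω - η ω|} + P (η ⁻¹' Ioc a b) :=
        (measure_mono hS).trans (measure_union_le _ _)
    _ ≤ ENNReal.ofReal (ε / δ ^ 2) + M * ENNReal.ofReal δ := by
      gcongr
      · exact measure_le_abs_le_of_lintegral_sq_le (hξ.sub hη).aemeasurable hδ hL2
      · rw [← hab, ← Real.volume_Ioc]
        exact measure_preimage_le_of_density_le hη hf hfM measurableSet_Ioc

end

lemma div_rpow_one_div_three_sq {ε : ℝ} (hε : 0 < ε) :
    ε / (ε ^ ((1 : ℝ) / 3)) ^ 2 = ε ^ ((1 : ℝ) / 3) := by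
  rw [div_eq_iff (by positivity), ← Real.rpow_natCast, ← Real.rpow_mul hε.le,
    ← Real.rpow_add hε]
  norm_num

theorem stmt2_general (Ω : Type) [MeasurableSpace Ω] (P : Measure Ω)
    (ξ η : Ω → ℝ) (hξ : Measurable ξ) (hη : Measurable η)
    (M : ℝ) (hM : 0 < M)
    (f : ℝ → ENNReal)
    (hf : Measure.map η P = MeasureTheory.volume.withDensity f)
    (hfM : ∀ᵐ x ∂(MeasureTheory.volume : Measure ℝ), f x ≤ ENNReal.ofReal M)
    (ε : ℝ) (hε : 0 < ε)
    (hL2 : (∫⁻ ω, ENNReal.ofReal ((ξ ω - η ω) ^ 2) ∂P) ≤ ENNReal.ofReal ε) :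
    ∀ p : ℝ,
      (P {ω | ξ ω > p ∧ η ω ≤ p}).toReal ≤ (M + 1) * ε ^ ((1 : ℝ) / 3) ∧
      (P {ω | ξ ω ≤ p ∧ η ω > p}).toReal ≤ (M + 1) * ε ^ ((1 : ℝ) / 3) := by
  intro p
  set δ := ε ^ ((1 : ℝ) / 3)
  have hδ : 0 < δ := by positivity
  have bound : ∀ {S : Set Ω} {a b : ℝ}, b - a = δ →
      S ⊆ {ω | δ ≤ |ξ ω - η ω|} ∪ η ⁻¹' Ioc a b → (P S).toReal ≤ (M + 1) * δ := by
    intro S a b hab hS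
    refine ENNReal.toReal_le_of_le_ofReal (by positivity) ?_
    have := measure_le_of_subset_le_abs_sub_union_Ioc hξ hη hf hfM hδ hL2 hab hS
    rwa [div_rpow_one_div_three_sq hε, ← ENNReal.ofReal_mul hM.le, ← ENNReal.ofReal_add hδ.le
      (by positivity), ← one_add_mul, add_comm] at this
  exact ⟨bound (sub_sub_cancel p δ) fun _ ⟨hξp, hηp⟩ =>
      le_abs_sub_or_mem_Ioc_of_le_of_lt δ hηp hξp,
    bound (add_sub_cancel_left p δ) fun _ ⟨hξp, hηp⟩ =>
      le_abs_sub_or_mem_Ioc_of_lt_of_le δ hξp hηp⟩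

/-- Key intermediate estimate in the proof of the paper's Lemma 8.2: if the law of `η`
has a Lebesgue density bounded by `M`, and `E[(ξ − η)²] ≤ ε`, then
`P(ξ > p, η ≤ p) ≤ (M+1)·ε^{1/3}` and `P(ξ ≤ p, η > p) ≤ (M+1)·ε^{1/3}`. -/
theorem stmt2 (Ω : Type) [MeasurableSpace Ω] (P : Measure Ω) [IsProbabilityMeasure P]
    (ξ η : Ω → ℝ) (hξ : Measurable ξ) (hη : Measurable η)
    (M : ℝ) (hM : 0 < M)
    (f : ℝ → ENNReal)
    (hf : Measure.map η P = MeasureTheory.volume.withDensity f)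
    (hfM : ∀ᵐ x ∂(MeasureTheory.volume : Measure ℝ), f x ≤ ENNReal.ofReal M)
    (ε : ℝ) (hε : 0 < ε)
    (hL2 : (∫⁻ ω, ENNReal.ofReal ((ξ ω - η ω) ^ 2) ∂P) ≤ ENNReal.ofReal ε) :
    ∀ p : ℝ,
      (P {ω | ξ ω > p ∧ η ω ≤ p}).toReal ≤ (M + 1) * ε ^ ((1 : ℝ) / 3) ∧
      (P {ω | ξ ω ≤ p ∧ η ω > p}).toReal ≤ (M + 1) * ε ^ ((1 : ℝ) / 3) :=
  stmt2_general Ω P ξ η hξ hη M hM f hf hfM ε hε hL2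
end

section
/- Let X be an integrable real random variable such that P(X < p) > 0 for every p ≤ 0, and let C₁ > 0 be a constant such that P(X < −(x + z)) ≤ C₁ · e^{−z} · P(X < −x) for all x, z ≥ 0. Then for every p ≤ 0: 0 ≤ p − E[X · 1_{X < p}] / P(X < p) ≤ C₁. (Equivalently, the conditional mean of X given {X < p} lies within C₁ of p.) -/
/-!
Write `A = {X < p}` and `m = P(A)`. Then `p·m − E[X·1_A] = E[(p − X)⁺]`, which is nonnegative and,
by the layer-cake formula, equals `∫₀^∞ P(X < p − t) dt`. Applying the tail hypothesis at `x = −p`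
bounds the integrand by `C₁ m e^{−t}`, so `E[(p − X)⁺] ≤ C₁ m`; dividing by `m > 0` gives both bounds.
-/

open MeasureTheory Set Real

variable {Ω : Type*} [MeasurableSpace Ω] {μ : Measure Ω} {X : Ω → ℝ}

theorem setIntegral_sub_eq_integral_measureReal_lt [IsFiniteMeasure μ] (hX : Integrable X μ)
    (p : ℝ) :
    ∫ ω in {ω | X ω < p}, (p - X ω) ∂μ = ∫ t in Ioi 0, μ.real {ω | X ω < p - t} := by
  have hA : NullMeasurableSet {ω | X ω < p} μ :=
    nullMeasurableSet_lt hX.aemeasurable aemeasurable_const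
  calc ∫ ω in {ω | X ω < p}, (p - X ω) ∂μ
      = ∫ ω in {ω | X ω < p}, max (p - X ω) 0 ∂μ :=
        setIntegral_congr_fun₀ hA fun ω (hω : X ω < p) => (max_eq_left (by linarith)).symm
    _ = ∫ ω, max (p - X ω) 0 ∂μ :=
        setIntegral_eq_integral_of_forall_compl_eq_zero fun ω (hω : ¬ X ω < p) =>
          max_eq_right (by linarith)
    _ = ∫ t in Ioi 0, μ.real {ω | t < max (p - X ω) 0} :=
        ((integrable_const p).sub hX).pos_part.integral_eq_integral_meas_lt
          (.of_forall fun _ => le_max_right _ _)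
    _ = ∫ t in Ioi 0, μ.real {ω | X ω < p - t} := by
        refine setIntegral_congr_fun measurableSet_Ioi fun t (ht : 0 < t) => ?_
        congr 1
        simp only [lt_max_iff, ht.not_gt, or_false, lt_sub_comm]

theorem setIntegral_Ioi_le_of_le_mul_exp_neg {f : ℝ → ℝ} {c : ℝ} (hf_nonneg : ∀ t > 0, 0 ≤ f t)
    (hf_le : ∀ t > 0, f t ≤ c * exp (-t)) : ∫ t in Ioi 0, f t ≤ c := by
  have hexp : IntegrableOn (fun t => c * exp (-t)) (Ioi 0) :=
    (integrableOn_exp_neg_Ioi 0).const_mul c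
  calc ∫ t in Ioi 0, f t ≤ ∫ t in Ioi 0, c * exp (-t) :=
        integral_mono_of_nonneg ((ae_restrict_iff' measurableSet_Ioi).2 (.of_forall hf_nonneg))
          hexp ((ae_restrict_iff' measurableSet_Ioi).2 (.of_forall hf_le))
    _ = c := by rw [integral_const_mul, integral_exp_neg_Ioi_zero, mul_one]

theorem stmt3_general (Ω : Type) [MeasurableSpace Ω] (P : Measure Ω) [IsProbabilityMeasure P]
    (X : Ω → ℝ) (hInt : Integrable X P)
    (hpos : ∀ p ≤ (0 : ℝ), 0 < (P {ω | X ω < p}).toReal)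
    (C₁ : ℝ)
    (htail : ∀ x ≥ (0 : ℝ), ∀ z ≥ (0 : ℝ),
      (P {ω | X ω < -(x + z)}).toReal ≤ C₁ * Real.exp (-z) * (P {ω | X ω < -x}).toReal) :
    ∀ p ≤ (0 : ℝ),
      0 ≤ p - (∫ ω in {ω | X ω < p}, X ω ∂P) / (P {ω | X ω < p}).toReal ∧
      p - (∫ ω in {ω | X ω < p}, X ω ∂P) / (P {ω | X ω < p}).toReal ≤ C₁ := by
  intro p hp
  set A := {ω | X ω < p}
  have hm : 0 < P.real A := hpos p hp
  have hshortfall : ∫ ω in A, (p - X ω) ∂P = p * P.real A - ∫ ω in A, X ω ∂P := by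
    rw [integral_sub (integrable_const p) hInt.integrableOn, setIntegral_const,
      smul_eq_mul, mul_comm]
  have hlayer := setIntegral_sub_eq_integral_measureReal_lt hInt p
  have hlower : 0 ≤ ∫ ω in A, (p - X ω) ∂P :=
    hlayer ▸ setIntegral_nonneg measurableSet_Ioi fun _ _ => measureReal_nonneg
  have hupper : ∫ ω in A, (p - X ω) ∂P ≤ C₁ * P.real A := by
    refine hlayer ▸ setIntegral_Ioi_le_of_le_mul_exp_neg (fun _ _ => measureReal_nonneg)
      fun t ht => ?_
    have h := htail (-p) (neg_nonneg.2 hp) t ht.le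
    rw [neg_neg, neg_add, neg_neg, ← sub_eq_add_neg] at h
    change P.real _ ≤ C₁ * exp (-t) * P.real A at h
    linarith
  have hcond : p - (∫ ω in A, X ω ∂P) / P.real A = (∫ ω in A, (p - X ω) ∂P) / P.real A := by
    rw [hshortfall]; field_simp
  change 0 ≤ p - (∫ ω in A, X ω ∂P) / P.real A ∧ p - (∫ ω in A, X ω ∂P) / P.real A ≤ C₁
  rw [hcond]
  exact ⟨div_nonneg hlower hm.le, (div_le_iff₀ hm).2 hupper⟩

/-- Measure-theoretic core of the paper's Lemma 7.2: if `X` is integrable, `P(X < p) > 0`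
for all `p ≤ 0`, and the lower tails satisfy the exponential bound
`P(X < −(x+z)) ≤ C₁ e^{−z} P(X < −x)` for all `x, z ≥ 0`, then for every `p ≤ 0` the
conditional mean of `X` given `{X < p}` lies within `C₁` of `p` (from below). -/
theorem stmt3 (Ω : Type) [MeasurableSpace Ω] (P : Measure Ω) [IsProbabilityMeasure P]
    (X : Ω → ℝ) (hX : Measurable X) (hInt : Integrable X P)
    (hpos : ∀ p ≤ (0 : ℝ), 0 < (P {ω | X ω < p}).toReal)
    (C₁ : ℝ) (hC₁ : 0 < C₁)
    (htail : ∀ x ≥ (0 : ℝ), ∀ z ≥ (0 : ℝ),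
      (P {ω | X ω < -(x + z)}).toReal ≤ C₁ * Real.exp (-z) * (P {ω | X ω < -x}).toReal) :
    ∀ p ≤ (0 : ℝ),
      0 ≤ p - (∫ ω in {ω | X ω < p}, X ω ∂P) / (P {ω | X ω < p}).toReal ∧
      p - (∫ ω in {ω | X ω < p}, X ω ∂P) / (P {ω | X ω < p}).toReal ≤ C₁ :=
  stmt3_general Ω P X hInt hpos C₁ htail
end

section
/- For every σ > 0 and every x < 0, the function p ↦ A_σ(p; x) attains its maximum over ℝ at a unique point p_σ(x); moreover it is strictly increasing on (−∞, p_σ(x)] and strictly decreasing on [p_σ(x), ∞), and p_σ(x) is the unique real solution p of the equation (1 − Φ(p/σ)) / φ(p/σ) = −x/σ. -/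
open MeasureTheory ProbabilityTheory Filter Set
open scoped Topology NNReal

/-- The standard normal density `φ`. -/
noncomputable def gaussPDF (t : ℝ) : ℝ := (Real.sqrt (2 * Real.pi))⁻¹ * Real.exp (-t ^ 2 / 2)

/-- The standard normal cumulative distribution function `Φ`. -/
noncomputable def gaussCDF (p : ℝ) : ℝ := ∫ t in Iic p, gaussPDF t

/-- `A_σ(p; x) = E[(p − x − σ·η)·1_{σ·η > p}]` with `η` standard normal. -/
noncomputable def Agauss (σ p x : ℝ) : ℝ :=
  ∫ t in {t : ℝ | σ * t > p}, (p - x - σ * t) ∂(gaussianReal 0 1)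

/-! `A_σ(p; x) = (p - x)(1 - Φ(p/σ)) - σ φ(p/σ)`, whose derivative in `p` is
`φ(p/σ) (R(p/σ) + x/σ)` with `R = (1 - Φ)/φ` the Mills ratio. The Mills inequality
`u (1 - Φ(u)) < φ(u)` gives `R' = u R - 1 < 0`, and `R` decreases from `+∞` to `0`; so for `x < 0`
the derivative changes sign exactly once, at the unique solution of `R(p/σ) = -x/σ`. -/

lemma setIntegral_pos_of_forall_pos {X : Type*} [MeasurableSpace X] {μ : Measure X}
    {f : X → ℝ} {s : Set X} (hs : MeasurableSet s) (hμs : μ s ≠ 0) (hf : IntegrableOn f s μ)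
    (hpos : ∀ x ∈ s, 0 < f x) : 0 < ∫ x in s, f x ∂μ := by
  rw [setIntegral_pos_iff_support_of_nonneg_ae
      ((ae_restrict_iff' hs).2 (ae_of_all _ fun x hx => (hpos x hx).le)) hf,
    (inter_eq_right.2 fun x hx => Function.mem_support.2 (hpos x hx).ne' :
      Function.support f ∩ s = s)]
  exact pos_iff_ne_zero.2 hμs

lemma setIntegral_gaussianReal {μ : ℝ} {v : ℝ≥0} (hv : v ≠ 0) {f : ℝ → ℝ} {s : Set ℝ}
    (hs : MeasurableSet s) :
    ∫ t in s, f t ∂gaussianReal μ v = ∫ t in s, gaussianPDFReal μ v t * f t := by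
  rw [← integral_indicator hs, integral_gaussianReal_eq_integral_smul hv, ← integral_indicator hs]
  congr 1 with t
  by_cases ht : t ∈ s <;> simp [ht]

lemma gaussPDF_eq_gaussianPDFReal : gaussPDF = gaussianPDFReal 0 1 := by
  ext t
  simp [gaussPDF, gaussianPDFReal]

lemma gaussPDF_pos (t : ℝ) : 0 < gaussPDF t := by
  rw [gaussPDF_eq_gaussianPDFReal]
  exact gaussianPDFReal_pos 0 1 t one_ne_zero

lemma gaussPDF_neg (t : ℝ) : gaussPDF (-t) = gaussPDF t := by
  simp [gaussPDF]

lemma integrable_gaussPDF : Integrable gaussPDF := by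
  rw [gaussPDF_eq_gaussianPDFReal]
  exact integrable_gaussianPDFReal 0 1

lemma integrable_mul_gaussPDF : Integrable fun t => t * gaussPDF t := by
  convert (integrable_mul_exp_neg_mul_sq (by norm_num : (0 : ℝ) < 1 / 2)).const_mul
    (Real.sqrt (2 * Real.pi))⁻¹ using 2 with t
  simp only [gaussPDF]
  ring_nf

lemma hasDerivAt_gaussPDF (t : ℝ) : HasDerivAt gaussPDF (-t * gaussPDF t) t := by
  have h : HasDerivAt (fun t : ℝ => -t ^ 2 / 2) (-t) t :=
    ((hasDerivAt_pow 2 t).neg.div_const 2).congr_deriv (by norm_num; ring)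
  exact (h.exp.const_mul (Real.sqrt (2 * Real.pi))⁻¹).congr_deriv (by rw [gaussPDF]; ring)

lemma continuous_gaussPDF : Continuous gaussPDF :=
  continuous_iff_continuousAt.2 fun t => (hasDerivAt_gaussPDF t).continuousAt

lemma tendsto_gaussPDF_atTop : Tendsto gaussPDF atTop (𝓝 0) := by
  have h : Tendsto (fun t : ℝ => -t ^ 2 / 2) atTop atBot :=
    (tendsto_neg_atTop_atBot.comp (tendsto_pow_atTop two_ne_zero)).atBot_div_const two_pos
  have := (Real.tendsto_exp_atBot.comp h).const_mul (Real.sqrt (2 * Real.pi))⁻¹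
  rwa [mul_zero] at this

lemma tendsto_gaussPDF_atBot : Tendsto gaussPDF atBot (𝓝 0) := by
  simpa [Function.comp_def, gaussPDF_neg] using tendsto_gaussPDF_atTop.comp tendsto_neg_atBot_atTop

lemma integral_Ioi_mul_gaussPDF (a : ℝ) : ∫ t in Ioi a, t * gaussPDF t = gaussPDF a := by
  simpa using integral_Ioi_of_hasDerivAt_of_tendsto' (f := fun t => -gaussPDF t) (a := a) (m := 0)
    (fun t _ => ((hasDerivAt_gaussPDF t).neg).congr_deriv (by ring))
    integrable_mul_gaussPDF.integrableOn (by simpa using tendsto_gaussPDF_atTop.neg)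

lemma integral_Ioi_gaussPDF (a : ℝ) : ∫ t in Ioi a, gaussPDF t = 1 - gaussCDF a := by
  have h := intervalIntegral.integral_Iic_add_Ioi (b := a) integrable_gaussPDF.integrableOn
    integrable_gaussPDF.integrableOn
  rw [gaussPDF_eq_gaussianPDFReal, integral_gaussianPDFReal_eq_one 0 one_ne_zero] at h
  rw [gaussCDF, gaussPDF_eq_gaussianPDFReal]
  linarith

lemma gaussCDF_lt_one (a : ℝ) : gaussCDF a < 1 := by
  have h := setIntegral_pos_of_forall_pos (measurableSet_Ioi (a := a)) (by simp)
    integrable_gaussPDF.integrableOn fun t _ => gaussPDF_pos t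
  rw [integral_Ioi_gaussPDF] at h
  linarith

lemma hasDerivAt_gaussCDF (p : ℝ) : HasDerivAt gaussCDF (gaussPDF p) p := by
  have h : gaussCDF = fun q => gaussCDF 0 + ∫ t in (0 : ℝ)..q, gaussPDF t := by
    ext q
    rw [gaussCDF, gaussCDF, ← intervalIntegral.integral_Iic_sub_Iic
      integrable_gaussPDF.integrableOn integrable_gaussPDF.integrableOn]
    ring
  rw [h]
  exact (continuous_gaussPDF.integral_hasStrictDerivAt 0 p).hasDerivAt.const_add _

lemma strictMono_gaussCDF : StrictMono gaussCDF :=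
  strictMono_of_deriv_pos fun p => (hasDerivAt_gaussCDF p).deriv ▸ gaussPDF_pos p

lemma mul_one_sub_gaussCDF_lt_gaussPDF (u : ℝ) : u * (1 - gaussCDF u) < gaussPDF u := by
  have hint : IntegrableOn (fun t => t * gaussPDF t - u * gaussPDF t) (Ioi u) :=
    integrable_mul_gaussPDF.integrableOn.sub (integrable_gaussPDF.integrableOn.const_mul u)
  have hpos : 0 < ∫ t in Ioi u, (t * gaussPDF t - u * gaussPDF t) :=
    setIntegral_pos_of_forall_pos measurableSet_Ioi (by simp) hint fun t ht =>
      by nlinarith [gaussPDF_pos t, mem_Ioi.1 ht]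
  rw [integral_sub integrable_mul_gaussPDF.integrableOn
    (integrable_gaussPDF.integrableOn.const_mul u), integral_const_mul,
    integral_Ioi_mul_gaussPDF, integral_Ioi_gaussPDF] at hpos
  linarith

noncomputable def millsRatio (u : ℝ) : ℝ := (1 - gaussCDF u) / gaussPDF u

lemma mul_millsRatio_lt_one (u : ℝ) : u * millsRatio u < 1 := by
  rw [millsRatio, mul_div_assoc', div_lt_one (gaussPDF_pos u)]
  exact mul_one_sub_gaussCDF_lt_gaussPDF u

lemma hasDerivAt_millsRatio (u : ℝ) : HasDerivAt millsRatio (u * millsRatio u - 1) u := by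
  refine (((hasDerivAt_gaussCDF u).const_sub 1).div (hasDerivAt_gaussPDF u)
    (gaussPDF_pos u).ne').congr_deriv ?_
  have := (gaussPDF_pos u).ne'
  unfold millsRatio
  field_simp
  ring

lemma continuous_millsRatio : Continuous millsRatio :=
  continuous_iff_continuousAt.2 fun u => (hasDerivAt_millsRatio u).continuousAt

lemma strictAnti_millsRatio : StrictAnti millsRatio :=
  strictAnti_of_deriv_neg fun u => by
    rw [(hasDerivAt_millsRatio u).deriv]
    linarith [mul_millsRatio_lt_one u]

lemma tendsto_millsRatio_atBot : Tendsto millsRatio atBot atTop := by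
  have hφ : Tendsto (fun u => (gaussPDF u)⁻¹) atBot atTop :=
    (tendsto_nhdsWithin_iff.2 ⟨tendsto_gaussPDF_atBot,
      Eventually.of_forall gaussPDF_pos⟩).inv_tendsto_nhdsGT_zero
  -- `1 - Φ(u) ≥ 1 - Φ(0) > 0` for `u ≤ 0`, while `1/φ(u) → ∞`
  refine tendsto_atTop_mono' atBot ?_ (hφ.const_mul_atTop (sub_pos.2 (gaussCDF_lt_one 0)))
  filter_upwards [eventually_le_atBot 0] with u hu
  rw [millsRatio, div_eq_mul_inv]
  exact mul_le_mul_of_nonneg_right (by linarith [strictMono_gaussCDF.monotone hu])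
    (inv_pos.2 (gaussPDF_pos u)).le

lemma exists_millsRatio_eq {c : ℝ} (hc : 0 < c) : ∃ u, millsRatio u = c := by
  refine mem_range_of_exists_le_of_exists_ge continuous_millsRatio ⟨c⁻¹, ?_⟩
    (tendsto_millsRatio_atBot.eventually_ge_atTop c).exists
  have := mul_millsRatio_lt_one c⁻¹
  rw [← div_eq_inv_mul, div_lt_one hc] at this
  exact this.le

section Agauss

variable {σ : ℝ} (x : ℝ)

lemma Agauss_eq (hσ : 0 < σ) (p : ℝ) :
    Agauss σ p x = (p - x) * (1 - gaussCDF (p / σ)) - σ * gaussPDF (p / σ) := by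
  have hset : {t : ℝ | σ * t > p} = Ioi (p / σ) := by
    ext t
    simp [div_lt_iff₀' hσ]
  rw [Agauss, hset, setIntegral_gaussianReal one_ne_zero measurableSet_Ioi,
    ← gaussPDF_eq_gaussianPDFReal, ← integral_Ioi_gaussPDF, ← integral_Ioi_mul_gaussPDF,
    ← integral_const_mul, ← integral_const_mul, ← integral_sub
      (integrable_gaussPDF.integrableOn.const_mul _)
      (integrable_mul_gaussPDF.integrableOn.const_mul _)]
  congr 1 with t
  ring

lemma hasDerivAt_Agauss (hσ : 0 < σ) (p : ℝ) :
    HasDerivAt (fun p => Agauss σ p x) (gaussPDF (p / σ) * (millsRatio (p / σ) - -x / σ)) p := by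
  have hdiv := (hasDerivAt_id p).div_const σ
  have hΦ := (hasDerivAt_gaussCDF (p / σ)).comp p hdiv
  have hφ := (hasDerivAt_gaussPDF (p / σ)).comp p hdiv
  rw [funext (Agauss_eq x hσ)]
  refine ((((hasDerivAt_id p).sub_const x).mul (hΦ.const_sub 1)).sub
    (hφ.const_mul σ)).congr_deriv ?_
  have := (gaussPDF_pos (p / σ)).ne'
  simp only [millsRatio, id, Function.comp_apply]
  field_simp
  ring

variable {x}

lemma Agauss_strictMonoOn_Iic (hσ : 0 < σ) {u : ℝ} (hu : millsRatio u = -x / σ) :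
    StrictMonoOn (fun p => Agauss σ p x) (Iic (σ * u)) := by
  refine strictMonoOn_of_deriv_pos (convex_Iic _)
    (fun p _ => (hasDerivAt_Agauss x hσ p).continuousAt.continuousWithinAt) fun p hp => ?_
  rw [interior_Iic, mem_Iio, ← div_lt_iff₀' hσ] at hp
  rw [(hasDerivAt_Agauss x hσ p).deriv, ← hu]
  exact mul_pos (gaussPDF_pos _) (sub_pos.2 (strictAnti_millsRatio hp))

lemma Agauss_strictAntiOn_Ici (hσ : 0 < σ) {u : ℝ} (hu : millsRatio u = -x / σ) :
    StrictAntiOn (fun p => Agauss σ p x) (Ici (σ * u)) := by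
  refine strictAntiOn_of_deriv_neg (convex_Ici _)
    (fun p _ => (hasDerivAt_Agauss x hσ p).continuousAt.continuousWithinAt) fun p hp => ?_
  rw [interior_Ici, mem_Ioi, ← lt_div_iff₀' hσ] at hp
  rw [(hasDerivAt_Agauss x hσ p).deriv, ← hu]
  exact mul_neg_of_pos_of_neg (gaussPDF_pos _) (sub_neg.2 (strictAnti_millsRatio hp))

end Agauss

/-- Property (i) in the proof of the paper's Lemma 6.3: for `σ > 0` and `x < 0`, the map
`p ↦ A_σ(p; x)` has a unique maximizer `p_σ(x)`, is strictly increasing on `(−∞, p_σ(x)]`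
and strictly decreasing on `[p_σ(x), ∞)`, and `p_σ(x)` is the unique real solution of
`(1 − Φ(p/σ))/φ(p/σ) = −x/σ`. -/
theorem stmt6 (σ x : ℝ) (hσ : 0 < σ) (hx : x < 0) :
    ∃! pstar : ℝ,
      (∀ p : ℝ, Agauss σ p x ≤ Agauss σ pstar x) ∧
      StrictMonoOn (fun p => Agauss σ p x) (Iic pstar) ∧
      StrictAntiOn (fun p => Agauss σ p x) (Ici pstar) ∧
      (1 - gaussCDF (pstar / σ)) / gaussPDF (pstar / σ) = -x / σ ∧
      ∀ p : ℝ, (1 - gaussCDF (p / σ)) / gaussPDF (p / σ) = -x / σ → p = pstar := by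
  obtain ⟨u, hu⟩ := exists_millsRatio_eq (div_pos (neg_pos.2 hx) hσ)
  have hmono := Agauss_strictMonoOn_Iic hσ hu
  have hanti := Agauss_strictAntiOn_Ici hσ hu
  have hroot (p : ℝ) (hp : millsRatio (p / σ) = -x / σ) : p = σ * u := by
    rw [← strictAnti_millsRatio.injective (hp.trans hu.symm)]
    field_simp
  refine ⟨σ * u, ⟨fun p => isMaxOn_univ_of_mono_anti hmono.monotoneOn hanti.antitoneOn
    (mem_univ p), hmono, hanti, ?_, hroot⟩, fun p hp => hroot p hp.2.2.2.1⟩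
  rw [mul_div_cancel_left₀ u hσ.ne']
  exact hu
end

section
/- Let ξ be an integrable real random variable and fix p ≤ 0. Then the function x ↦ E[(p − x − ξ) · 1_{ξ > p}] − sup_{y ≥ 0} E[(y − x − ξ) · 1_{ξ > y}] is non-increasing on ℝ (the supremum over y ≥ 0 being finite for every x). -/
open MeasureTheory ProbabilityTheory Filter Set

/-!
Write `g x y = ∫_{ξ > y} (y - x - ξ) dP` and `μ y = P(ξ > y)`. Shifting `x` moves `g` linearly:
`g x₁ y = g x₂ y + (x₂ - x₁) μ y`. Since `μ` is non-increasing and `p ≤ 0 ≤ y`, for `x₁ ≤ x₂`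
the supremum over `y ≥ 0` grows by at most `(x₂ - x₁) μ p` when `x` drops from `x₂` to `x₁`,
which is exactly how much `g · p` grows. Boundedness comes from `g x y ≤ -x μ y ≤ |x|`.
-/

section TailIntegral

variable {Ω : Type*} [MeasurableSpace Ω] {P : Measure Ω} {ξ : Ω → ℝ}

theorem setIntegral_tail_sub_eq [IsFiniteMeasure P] (hInt : Integrable ξ P) (x x' y : ℝ) :
    ∫ ω in {ω | ξ ω > y}, (y - x - ξ ω) ∂P
      = ∫ ω in {ω | ξ ω > y}, (y - x' - ξ ω) ∂P + (x' - x) * P.real {ω | ξ ω > y} := by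
  have hsplit : (fun ω => y - x - ξ ω) = fun ω => (y - x' - ξ ω) + (x' - x) := by
    funext ω; ring
  have hint : IntegrableOn (fun ω => y - x' - ξ ω) {ω | ξ ω > y} P :=
    (integrable_const _).sub hInt.restrict
  rw [hsplit, integral_add hint (integrable_const _), setIntegral_const, smul_eq_mul, mul_comm]

theorem setIntegral_tail_le_abs [IsProbabilityMeasure P] (hInt : Integrable ξ P) (x y : ℝ) :
    ∫ ω in {ω | ξ ω > y}, (y - x - ξ ω) ∂P ≤ |x| := by
  have hle : ∫ ω in {ω | ξ ω > y}, (y - x - ξ ω) ∂P ≤ ∫ _ in {ω | ξ ω > y}, -x ∂P :=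
    setIntegral_mono_on₀ ((integrable_const _).sub hInt.restrict) (integrable_const _)
      (nullMeasurableSet_lt aemeasurable_const hInt.aemeasurable)
      fun ω (hω : y < ξ ω) => by linarith
  have hμ : P.real {ω | ξ ω > y} ≤ 1 := measureReal_le_one
  rw [setIntegral_const, smul_eq_mul] at hle
  nlinarith [neg_le_abs x, abs_nonneg x, measureReal_nonneg (μ := P) (s := {ω | ξ ω > y})]

theorem bddAbove_setIntegral_tail [IsProbabilityMeasure P] (hInt : Integrable ξ P) (x : ℝ)
    (s : Set ℝ) :
    BddAbove ((fun y => ∫ ω in {ω | ξ ω > y}, (y - x - ξ ω) ∂P) '' s) :=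
  ⟨|x|, by rintro _ ⟨y, -, rfl⟩; exact setIntegral_tail_le_abs hInt x y⟩

end TailIntegral

theorem stmt9_general (Ω : Type) [MeasurableSpace Ω] (P : Measure Ω) [IsProbabilityMeasure P]
    (ξ : Ω → ℝ) (hInt : Integrable ξ P)
    (p : ℝ) (hp : p ≤ 0) :
    (∀ x : ℝ, BddAbove ((fun y => ∫ ω in {ω | ξ ω > y}, (y - x - ξ ω) ∂P) '' Ici 0)) ∧
    Antitone (fun x =>
      (∫ ω in {ω | ξ ω > p}, (p - x - ξ ω) ∂P)
        - sSup ((fun y => ∫ ω in {ω | ξ ω > y}, (y - x - ξ ω) ∂P) '' Ici 0)) := by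
  set g := fun x y : ℝ => ∫ ω in {ω | ξ ω > y}, (y - x - ξ ω) ∂P
  refine ⟨fun x => bddAbove_setIntegral_tail hInt x _, fun x₁ x₂ hx => ?_⟩
  have hsup : sSup (g x₁ '' Ici 0) ≤ sSup (g x₂ '' Ici 0) + (x₂ - x₁) * P.real {ω | ξ ω > p} := by
    refine csSup_le (nonempty_Ici.image _) ?_
    rintro _ ⟨y, hy, rfl⟩
    have htail : P.real {ω | ξ ω > y} ≤ P.real {ω | ξ ω > p} :=
      measureReal_mono fun ω (hω : y < ξ ω) => show p < ξ ω by linarith [mem_Ici.mp hy]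
    have hg : g x₂ y ≤ sSup (g x₂ '' Ici 0) :=
      le_csSup (bddAbove_setIntegral_tail hInt x₂ _) (mem_image_of_mem _ hy)
    have hshift_y := setIntegral_tail_sub_eq hInt x₁ x₂ y
    have := mul_le_mul_of_nonneg_left htail (sub_nonneg.mpr hx)
    linarith
  have hshift_p := setIntegral_tail_sub_eq hInt x₁ x₂ p
  show g x₂ p - sSup (g x₂ '' Ici 0) ≤ g x₁ p - sSup (g x₁ '' Ici 0)
  linarith

/-- Monotonicity-in-`x` claim from the proof of the paper's Lemma 6.3: for integrable `ξ`
and fixed `p ≤ 0`, the map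
`x ↦ E[(p − x − ξ)·1_{ξ > p}] − sup_{y ≥ 0} E[(y − x − ξ)·1_{ξ > y}]`
is non-increasing on `ℝ`, the supremum over `y ≥ 0` being finite for every `x`. -/
theorem stmt9 (Ω : Type) [MeasurableSpace Ω] (P : Measure Ω) [IsProbabilityMeasure P]
    (ξ : Ω → ℝ) (hξ : Measurable ξ) (hInt : Integrable ξ P)
    (p : ℝ) (hp : p ≤ 0) :
    (∀ x : ℝ, BddAbove ((fun y => ∫ ω in {ω | ξ ω > y}, (y - x - ξ ω) ∂P) '' Ici 0)) ∧
    Antitone (fun x =>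
      (∫ ω in {ω | ξ ω > p}, (p - x - ξ ω) ∂P)
        - sSup ((fun y => ∫ ω in {ω | ξ ω > y}, (y - x - ξ ω) ∂P) '' Ici 0)) :=
  stmt9_general Ω P ξ hInt p hp
end

section
/- Let σ > 0, let ξ be a real random variable with law N(0, σ²), and let λ < 0. Then for every p ∈ ℝ: λ + max(0, E[(p − λ − ξ) · 1_{ξ > p}]) < 0. -/
open MeasureTheory ProbabilityTheory Set

/-! On `{ξ > p}` the integrand `p - λ - ξ` is below `-λ > 0`, so the integral is at most
`-λ · P(ξ > p)`. A nondegenerate Gaussian charges every half-line `(-∞, p]`, hence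
`P(ξ > p) < 1` and the bound is strict. A non-integrable integrand has Bochner integral `0`,
which is also below `-λ`. -/

lemma setIntegral_lt_of_le_of_measure_lt_one {Ω : Type*} [MeasurableSpace Ω] {P : Measure Ω}
    [IsProbabilityMeasure P] {s : Set Ω} (hs : MeasurableSet s) (hPs : P s < 1)
    {f : Ω → ℝ} {c : ℝ} (hc : 0 < c) (hf : ∀ ω ∈ s, f ω ≤ c) :
    ∫ ω in s, f ω ∂P < c := by
  by_cases hint : IntegrableOn f s P
  · have hPs_real : P.real s < 1 :=
      ENNReal.toReal_lt_of_lt_ofReal (by rwa [ENNReal.ofReal_one])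
    calc ∫ ω in s, f ω ∂P ≤ ∫ _ in s, c ∂P :=
          setIntegral_mono_on hint (integrableOn_const (measure_ne_top P s)) hs hf
      _ = P.real s * c := setIntegral_const c
      _ < 1 * c := by gcongr
      _ = c := one_mul c
  · rw [integral_undef hint]
    exact hc

lemma gaussianReal_Ioi_lt_one (μ : ℝ) {v : NNReal} (hv : v ≠ 0) (p : ℝ) :
    gaussianReal μ v (Ioi p) < 1 := by
  have hIic : gaussianReal μ v (Iic p) ≠ 0 := fun h => by
    simpa using gaussianReal_absolutelyContinuous' μ hv h
  rw [← compl_Iic, prob_compl_eq_one_sub measurableSet_Iic]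
  exact ENNReal.sub_lt_self ENNReal.one_ne_top one_ne_zero hIic

/-- Induction step from Section 3 of the paper (market-neutral case): if `ξ ~ N(0, σ²)`
and `λ < 0`, then for every `p`, `λ + (E[(p − λ − ξ)·1_{ξ > p}])⁺ < 0`. -/
theorem stmt10 (Ω : Type) [MeasurableSpace Ω] (P : Measure Ω) [IsProbabilityMeasure P]
    (ξ : Ω → ℝ) (hξ : Measurable ξ) (σ : ℝ) (hσ : 0 < σ)
    (hlaw : Measure.map ξ P = gaussianReal 0 ((σ ^ 2).toNNReal))
    (lam : ℝ) (hlam : lam < 0) (p : ℝ) :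
    lam + max 0 (∫ ω in {ω | ξ ω > p}, (p - lam - ξ ω) ∂P) < 0 := by
  have hv : (σ ^ 2).toNNReal ≠ 0 := by simpa using hσ.ne'
  have htail : P (ξ ⁻¹' Ioi p) < 1 := by
    rw [← Measure.map_apply hξ measurableSet_Ioi, hlaw]
    exact gaussianReal_Ioi_lt_one 0 hv p
  have hI : ∫ ω in {ω | ξ ω > p}, (p - lam - ξ ω) ∂P < -lam :=
    setIntegral_lt_of_le_of_measure_lt_one (hξ measurableSet_Ioi) htail (neg_pos.2 hlam)
      fun ω (hω : p < ξ ω) => by linarith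
  linarith [max_lt (neg_pos.2 hlam) hI]
end

section
/- For all constants 0 < c ≤ C there exists ε > 0, depending only on c and C, with the following property. Suppose σ ∈ [c, C] and the drift satisfies |μ_t(ω)| ≤ √ε for all t ∈ [0, 1], P-almost surely. Then for every c₁ > 0 there exists C₁ > 0, depending only on (c, C, ε, c₁), such that P(X₁ > x + z) ≤ C₁ · e^{−c₁ z} · P(X₁ > x) for all x, z ≥ 0; equivalently, P(X₁ > x + z | X₁ > x) ≤ C₁ · e^{−c₁ z}. -/
/-!
Take `ε = 1`, so that the drift term `D = ∫₀¹ μ` lies in `[-1, 1]` and `X₁ = D + σ B₁` is squeezed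
between the shifts `σ B₁ ∓ 1` of a centred Gaussian of variance `v = σ²`. On a half-line `(a, ∞)`
with `a` above the mean, translating by `b ≥ 0` multiplies the Gaussian density pointwise by at most
`exp (-b² / 2v)`, so `P(X₁ > x + z) ≤ exp (-(z - 2)² / 2v) P(X₁ > x)` for `z ≥ 2`; completing the
square bounds this factor by `exp (2c₁ + c₁² C² / 2) e^{-c₁ z}`, and for `z ≤ 2` that constant is
already at least `e^{c₁ z}`.
-/

open MeasureTheory ProbabilityTheory Set
open scoped NNReal

lemma gaussianPDFReal_add_le {m x b : ℝ} (v : ℝ≥0) (hx : m ≤ x) (hb : 0 ≤ b) :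
    gaussianPDFReal m v (x + b) ≤ Real.exp (-b ^ 2 / (2 * v)) * gaussianPDFReal m v x := by
  rw [gaussianPDFReal, gaussianPDFReal, mul_left_comm, ← Real.exp_add, ← add_div]
  gcongr
  nlinarith [mul_nonneg (sub_nonneg.mpr hx) hb]

lemma gaussianReal_Ioi_add_le (m : ℝ) {v : ℝ≥0} (hv : v ≠ 0) {a b : ℝ} (ha : m ≤ a)
    (hb : 0 ≤ b) :
    gaussianReal m v (Ioi (a + b)) ≤
      ENNReal.ofReal (Real.exp (-b ^ 2 / (2 * v))) * gaussianReal m v (Ioi a) := by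
  rw [gaussianReal_apply m hv, gaussianReal_apply m hv]
  have hpre : (· + b) ⁻¹' Ioi (a + b) = Ioi a := by ext x; simp
  calc ∫⁻ x in Ioi (a + b), gaussianPDF m v x
      = ∫⁻ x in Ioi a, gaussianPDF m v (x + b) := by
        rw [← hpre, (measurePreserving_add_right volume b).setLIntegral_comp_preimage_emb
          (MeasurableEquiv.addRight b).measurableEmbedding]
    _ ≤ ∫⁻ x in Ioi a, ENNReal.ofReal (Real.exp (-b ^ 2 / (2 * v))) * gaussianPDF m v x := by
        refine setLIntegral_mono ((measurable_gaussianPDF m v).const_mul _) fun x hx => ?_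
        rw [gaussianPDF, gaussianPDF, ← ENNReal.ofReal_mul (Real.exp_nonneg _)]
        exact ENNReal.ofReal_le_ofReal (gaussianPDFReal_add_le v (ha.trans (le_of_lt hx)) hb)
    _ = _ := lintegral_const_mul _ (measurable_gaussianPDF m v)

section BoundedPerturbation

variable {Ω : Type*} [MeasurableSpace Ω] {P : Measure Ω} {Y D : Ω → ℝ} {v : ℝ≥0} {K : ℝ}

lemma aemeasurable_of_map_eq_gaussianReal {m : ℝ} (hY : P.map Y = gaussianReal m v) :
    AEMeasurable Y P :=
  .of_map_ne_zero (hY ▸ IsProbabilityMeasure.ne_zero _)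

lemma map_const_mul_eq_gaussianReal (hY : P.map Y = gaussianReal 0 v) (a : ℝ) :
    P.map (fun ω => a * Y ω) = gaussianReal 0 (.mk (a ^ 2) (sq_nonneg a) * v) := by
  have hYm := aemeasurable_of_map_eq_gaussianReal hY
  rw [← Function.comp_def (a * ·) Y,
    ← (measurable_const_mul a).aemeasurable.map_map_of_aemeasurable hYm, hY,
    gaussianReal_map_const_mul, mul_zero]

lemma measure_lt_add_le_gaussianReal_Ioi (hY : P.map Y = gaussianReal 0 v)
    (hD : ∀ᵐ ω ∂P, |D ω| ≤ K) (y : ℝ) :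
    P {ω | y < D ω + Y ω} ≤ gaussianReal 0 v (Ioi (y - K)) := by
  have hYm := aemeasurable_of_map_eq_gaussianReal hY
  rw [← hY, Measure.map_apply_of_aemeasurable hYm measurableSet_Ioi]
  refine measure_mono_ae ?_
  filter_upwards [hD] with ω hω
  exact fun (hlt : y < D ω + Y ω) => show y - K < Y ω by linarith [(abs_le.mp hω).2]

lemma gaussianReal_Ioi_le_measure_lt_add (hY : P.map Y = gaussianReal 0 v)
    (hD : ∀ᵐ ω ∂P, |D ω| ≤ K) (y : ℝ) :
    gaussianReal 0 v (Ioi (y + K)) ≤ P {ω | y < D ω + Y ω} := by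
  have hYm := aemeasurable_of_map_eq_gaussianReal hY
  rw [← hY, Measure.map_apply_of_aemeasurable hYm measurableSet_Ioi]
  refine measure_mono_ae ?_
  filter_upwards [hD] with ω hω
  exact fun (hlt : y + K < Y ω) => show y < D ω + Y ω by linarith [(abs_le.mp hω).1]

lemma measure_lt_add_add_le_exp_mul (hv : v ≠ 0) (hY : P.map Y = gaussianReal 0 v)
    (hD : ∀ᵐ ω ∂P, |D ω| ≤ K) {x z c₁ : ℝ} (hx : -K ≤ x) (hz : 0 ≤ z) (hc₁ : 0 ≤ c₁) :
    P {ω | x + z < D ω + Y ω} ≤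
      ENNReal.ofReal (Real.exp (2 * K * c₁ + c₁ ^ 2 * v / 2 - c₁ * z)) *
        P {ω | x < D ω + Y ω} := by
  rcases le_total z (2 * K) with hzK | hzK
  · have hmono : P {ω | x + z < D ω + Y ω} ≤ P {ω | x < D ω + Y ω} :=
      measure_mono fun ω (h : x + z < D ω + Y ω) => show x < D ω + Y ω by linarith
    refine hmono.trans (le_mul_of_one_le_left zero_le ?_)
    refine ENNReal.one_le_ofReal.mpr (Real.one_le_exp ?_)
    nlinarith [mul_nonneg hc₁ (sub_nonneg.mpr hzK), sq_nonneg c₁, v.2]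
  · set w := z - 2 * K
    have hv0 : (0 : ℝ) < v := by positivity
    -- completing the square: `w² / 2v + c₁² v / 2 ≥ c₁ w`
    have hexp : -w ^ 2 / (2 * v) ≤ 2 * K * c₁ + c₁ ^ 2 * v / 2 - c₁ * z := by
      have : -w ^ 2 / (2 * v) = c₁ ^ 2 * v / 2 - c₁ * w - (w - c₁ * v) ^ 2 / (2 * v) := by
        field_simp; ring
      rw [this]
      have : 0 ≤ (w - c₁ * v) ^ 2 / (2 * v) := by positivity
      linarith
    calc P {ω | x + z < D ω + Y ω}
        ≤ gaussianReal 0 v (Ioi (x + K + w)) := by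
          convert measure_lt_add_le_gaussianReal_Ioi hY hD (x + z) using 3; ring
      _ ≤ ENNReal.ofReal (Real.exp (-w ^ 2 / (2 * v))) * gaussianReal 0 v (Ioi (x + K)) :=
          gaussianReal_Ioi_add_le 0 hv (by linarith) (by linarith)
      _ ≤ _ := by
          gcongr
          exact gaussianReal_Ioi_le_measure_lt_add hY hD x

end BoundedPerturbation

theorem stmt12_general (c C : ℝ) (hc : 0 < c) :
    ∃ ε > (0 : ℝ), ∀ c₁ : ℝ, 0 < c₁ → ∃ C₁ > (0 : ℝ),
      ∀ (Ω : Type) [mΩ : MeasurableSpace Ω] (P : Measure Ω), IsProbabilityMeasure P →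
      ∀ (F : Filtration ℝ mΩ) (B : ℝ → Ω → ℝ) (μ : ℝ → Ω → ℝ) (σ : ℝ),
        (∀ ω, Continuous fun t => B t ω) →
        (∀ ω, B 0 ω = 0) →
        Adapted F B →
        (∀ s t : ℝ, 0 ≤ s → s ≤ t → t ≤ 1 →
          Measure.map (fun ω => B t ω - B s ω) P = gaussianReal 0 ((t - s).toNNReal)) →
        (∀ s t : ℝ, 0 ≤ s → s ≤ t → t ≤ 1 →
          Indep (MeasurableSpace.comap (fun ω => B t ω - B s ω)
            (inferInstance : MeasurableSpace ℝ)) (F s) P) →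
        ProgMeasurable F μ →
        σ ∈ Icc c C →
        (∀ᵐ ω ∂P, ∀ t ∈ Icc (0 : ℝ) 1, |μ t ω| ≤ Real.sqrt ε) →
        ∀ x z : ℝ, 0 ≤ x → 0 ≤ z →
          P {ω | x + z < (∫ u in (0 : ℝ)..1, μ u ω) + σ * B 1 ω}
            ≤ ENNReal.ofReal (C₁ * Real.exp (-c₁ * z)) *
              P {ω | x < (∫ u in (0 : ℝ)..1, μ u ω) + σ * B 1 ω} := by
  refine ⟨1, one_pos, fun c₁ hc₁ => ⟨Real.exp (2 * c₁ + c₁ ^ 2 * C ^ 2 / 2), Real.exp_pos _, ?_⟩⟩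
  intro Ω _ P _ F B μ σ _ hB0 _ hgauss _ _ hσ hμ x z hx hz
  have hσ0 : 0 < σ := hc.trans_le hσ.1
  have hdrift : ∀ᵐ ω ∂P, |∫ u in (0 : ℝ)..1, μ u ω| ≤ 1 := by
    filter_upwards [hμ] with ω hω
    have hbound : ∀ u ∈ uIoc (0 : ℝ) 1, ‖μ u ω‖ ≤ 1 := fun u hu => by
      simpa using hω u (Ioc_subset_Icc_self (by simpa using hu))
    simpa using intervalIntegral.norm_integral_le_of_norm_le_const hbound
  have hB1 : P.map (B 1) = gaussianReal 0 1 := by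
    simpa [hB0] using hgauss 0 1 le_rfl zero_le_one le_rfl
  have hσB1 := map_const_mul_eq_gaussianReal hB1 σ
  rw [mul_one] at hσB1
  calc _ ≤ ENNReal.ofReal (Real.exp (2 * 1 * c₁ + c₁ ^ 2 * σ ^ 2 / 2 - c₁ * z)) * _ :=
        measure_lt_add_add_le_exp_mul (by rw [Ne, ← NNReal.coe_eq_zero]; simp [hσ0.ne']) hσB1 hdrift (by linarith) hz hc₁.le
    _ ≤ _ := by
        gcongr
        rw [← Real.exp_add]
        gcongr
        nlinarith [mul_self_le_mul_self hσ0.le hσ.2]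

/-- Constant-diffusion-coefficient case of the paper's Lemma 5.2: for all `0 < c ≤ C`
there exists `ε > 0` (depending only on `c, C`) such that for every `c₁ > 0` there is
`C₁ > 0` (depending only on `c, C, ε, c₁`) with the following property. For every
filtered probability space carrying a Brownian motion `B`, a progressively measurable
drift `μ` with `|μ_t| ≤ √ε` a.s. on `[0,1]`, and a constant `σ ∈ [c, C]`, the process
`X_t = ∫₀^t μ_u du + σ B_t` satisfies
`P(X₁ > x + z) ≤ C₁ e^{−c₁ z} P(X₁ > x)` for all `x, z ≥ 0`. -/
theorem stmt12 (c C : ℝ) (hc : 0 < c) (hcC : c ≤ C) :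
    ∃ ε > (0 : ℝ), ∀ c₁ : ℝ, 0 < c₁ → ∃ C₁ > (0 : ℝ),
      ∀ (Ω : Type) [mΩ : MeasurableSpace Ω] (P : Measure Ω), IsProbabilityMeasure P →
      ∀ (F : Filtration ℝ mΩ) (B : ℝ → Ω → ℝ) (μ : ℝ → Ω → ℝ) (σ : ℝ),
        (∀ ω, Continuous fun t => B t ω) →
        (∀ ω, B 0 ω = 0) →
        Adapted F B →
        (∀ s t : ℝ, 0 ≤ s → s ≤ t → t ≤ 1 →
          Measure.map (fun ω => B t ω - B s ω) P = gaussianReal 0 ((t - s).toNNReal)) →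
        (∀ s t : ℝ, 0 ≤ s → s ≤ t → t ≤ 1 →
          Indep (MeasurableSpace.comap (fun ω => B t ω - B s ω)
            (inferInstance : MeasurableSpace ℝ)) (F s) P) →
        ProgMeasurable F μ →
        σ ∈ Icc c C →
        (∀ᵐ ω ∂P, ∀ t ∈ Icc (0 : ℝ) 1, |μ t ω| ≤ Real.sqrt ε) →
        ∀ x z : ℝ, 0 ≤ x → 0 ≤ z →
          P {ω | x + z < (∫ u in (0 : ℝ)..1, μ u ω) + σ * B 1 ω}
            ≤ ENNReal.ofReal (C₁ * Real.exp (-c₁ * z)) *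
              P {ω | x < (∫ u in (0 : ℝ)..1, μ u ω) + σ * B 1 ω} :=
  stmt12_general c C hc
end

section
/- Suppose σ ≥ c > 0 and the drift satisfies |μ_t(ω)| ≤ √ε for all t ∈ [0, 1], P-almost surely, for some ε ≥ 0. Then for every x ≥ 0: P(X₁ > x) ≥ (1/2 − √ε / (c·√(2π))) · P(sup_{t∈[0,1]} X_t > x). -/
/-!
Discretize time on dyadic grids and split the event that `X` exceeds `x` at some grid time
according to the first such time `s`. Each piece is `F s`-measurable, and on it `X₁ ≤ x` forces
`B₁ - B_s ≤ √ε (1 - s) / σ`, since the drift moves `X` by at most `√ε (1 - s)` after time `s`.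
By independence of the increment and `P(N(0, v) ≤ a) ≤ 1/2 + a / √(2πv)`, this has conditional
probability at most `1/2 + √ε / (σ √(2π))`. Summing over the pieces and refining the grid, which
exhausts `{sup X > x}` because the paths are continuous, gives the bound.
-/

open MeasureTheory ProbabilityTheory Filter Set Topology
open scoped NNReal ENNReal

section Gaussian

open Real

lemma gaussianReal_Iic_zero {v : ℝ≥0} (hv : v ≠ 0) : gaussianReal 0 v (Iic 0) = 2⁻¹ := by
  have h_symm : gaussianReal 0 v (Ici 0) = gaussianReal 0 v (Iic 0) := by
    conv_rhs => rw [← neg_zero, ← gaussianReal_map_neg,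
      Measure.map_apply measurable_neg measurableSet_Iic]
    simp
  have h_total : gaussianReal 0 v (Iic 0) + gaussianReal 0 v (Ici 0) = 1 := by
    rw [measure_congr (Ioi_ae_eq_Ici' (gaussianReal_absolutelyContinuous 0 hv (by simp))).symm,
      ← measure_union (Iic_disjoint_Ioi le_rfl) measurableSet_Ioi, Iic_union_Ioi, measure_univ]
  rw [h_symm, ← two_mul] at h_total
  exact ENNReal.eq_inv_of_mul_eq_one_left (by rwa [mul_comm])

lemma gaussianPDFReal_le (m : ℝ) (v : ℝ≥0) (y : ℝ) :
    gaussianPDFReal m v y ≤ (√(2 * π * v))⁻¹ := by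
  rw [gaussianPDFReal]
  refine mul_le_of_le_one_right (by positivity) (exp_le_one_iff.2 ?_)
  exact div_nonpos_of_nonpos_of_nonneg (neg_nonpos.2 (sq_nonneg _)) (by positivity)

lemma gaussianReal_Iic_le {v : ℝ≥0} (hv : v ≠ 0) {a : ℝ} (ha : 0 ≤ a) :
    gaussianReal 0 v (Iic a) ≤ ENNReal.ofReal (1 / 2 + a / √(2 * π * v)) := by
  have h_Ioc : gaussianReal 0 v (Ioc 0 a) ≤ ENNReal.ofReal (a / √(2 * π * v)) := by
    rw [gaussianReal_apply 0 hv]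
    calc ∫⁻ y in Ioc 0 a, gaussianPDF 0 v y
        ≤ ∫⁻ _ in Ioc 0 a, ENNReal.ofReal (√(2 * π * v))⁻¹ :=
          lintegral_mono fun y => ENNReal.ofReal_le_ofReal (gaussianPDFReal_le 0 v y)
      _ = ENNReal.ofReal (a / √(2 * π * v)) := by
          rw [setLIntegral_const, volume_Ioc, sub_zero, ← ENNReal.ofReal_mul (by positivity),
            inv_mul_eq_div]
  calc gaussianReal 0 v (Iic a) = gaussianReal 0 v (Iic 0) + gaussianReal 0 v (Ioc 0 a) := by
        rw [← Iic_union_Ioc_eq_Iic ha, measure_union (Iic_disjoint_Ioc le_rfl) measurableSet_Ioc]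
    _ ≤ ENNReal.ofReal (1 / 2) + ENNReal.ofReal (a / √(2 * π * v)) := by
        rw [gaussianReal_Iic_zero hv, one_div, ENNReal.ofReal_inv_of_pos two_pos,
          ENNReal.ofReal_ofNat]
        gcongr
    _ = _ := (ENNReal.ofReal_add (by norm_num) (by positivity)).symm

end Gaussian

namespace MeasureTheory

open scoped Interval

variable {Ω : Type*} {mΩ : MeasurableSpace Ω}

lemma one_sub_mul_measure_le_measure_inter {P : Measure Ω} [IsFiniteMeasure P] {A G : Set Ω}
    {q : ℝ≥0∞} (h : P (A \ G) ≤ q * P A) : (1 - q) * P A ≤ P (A ∩ G) := by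
  rw [ENNReal.sub_mul fun _ _ => measure_ne_top P A, one_mul, tsub_le_iff_right]
  exact (measure_le_inter_add_sdiff P A G).trans (add_le_add_right h _)

lemma mul_measure_iUnion_le_of_disjointed {P : Measure Ω} {S : ℕ → Set Ω}
    (hS : ∀ k, MeasurableSet (S k)) {G : Set Ω} (hG : MeasurableSet G) {r : ℝ≥0∞}
    (h : ∀ k, r * P (disjointed S k) ≤ P (disjointed S k ∩ G)) :
    r * P (⋃ k, S k) ≤ P G :=
  calc r * P (⋃ k, S k) = ∑' k, r * P (disjointed S k) := by
        rw [← iUnion_disjointed, measure_iUnion (disjoint_disjointed S) (.disjointed hS),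
          ENNReal.tsum_mul_left]
    _ ≤ ∑' k, P (disjointed S k ∩ G) := ENNReal.tsum_le_tsum h
    _ = P (⋃ k, disjointed S k ∩ G) :=
        (measure_iUnion ((disjoint_disjointed S).mono fun _ _ h =>
          h.mono inter_subset_left inter_subset_left)
          fun k => (MeasurableSet.disjointed hS k).inter hG).symm
    _ ≤ P G := measure_mono (iUnion_subset fun _ => inter_subset_right)

lemma Filtration.measurableSet_disjointed {ι : Type*} [Preorder ι] {F : Filtration ι mΩ}
    {t : ℕ → ι} (ht : Monotone t) {S : ℕ → Set Ω} (hS : ∀ k, MeasurableSet[F (t k)] (S k))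
    (k : ℕ) : MeasurableSet[F (t k)] (disjointed S k) := by
  rw [disjointed_eq_inter_compl]
  exact (hS k).inter <|
    .biInter (to_countable _) fun j hj => (F.mono (ht (le_of_lt hj)) _ (hS j)).compl

variable {F : Filtration ℝ mΩ} {μ : ℝ → Ω → ℝ}

lemma IsStronglyProgressive.stronglyMeasurable_min (hμ : IsStronglyProgressive F μ) (t : ℝ) :
    StronglyMeasurable[MeasurableSpace.prod inferInstance (F t)]
      fun p : ℝ × Ω => μ (min p.1 t) p.2 :=
  (hμ t).comp_measurable <|
    ((measurable_fst.min measurable_const).subtype_mk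
      (h := fun _ => mem_Iic.2 (min_le_right _ _))).prodMk measurable_snd

lemma IsStronglyProgressive.stronglyMeasurable_intervalIntegral
    (hμ : IsStronglyProgressive F μ) {t : ℝ} (ht : 0 ≤ t) :
    StronglyMeasurable[F t] fun ω => ∫ u in (0 : ℝ)..t, μ u ω := by
  have h := @StronglyMeasurable.integral_prod_left' ℝ Ω ℝ _ (F t) (volume.restrict (Ioc 0 t)) _ _ _
    _ (hμ.stronglyMeasurable_min t)
  convert h using 2 with ω
  rw [intervalIntegral.integral_of_le ht]
  exact setIntegral_congr_fun measurableSet_Ioc fun u hu => by rw [min_eq_left hu.2]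

lemma IsStronglyProgressive.intervalIntegrable_of_abs_le (hμ : IsStronglyProgressive F μ)
    {T K : ℝ} (hT : 0 ≤ T) {ω : Ω} (h : ∀ t ∈ Icc 0 T, |μ t ω| ≤ K) :
    IntervalIntegrable (fun t => μ t ω) volume 0 T := by
  have hmeas : AEStronglyMeasurable (fun t => μ t ω) (volume.restrict (Ι 0 T)) := by
    refine ((hμ.stronglyMeasurable_min T).comp_measurable
      (@measurable_prodMk_right _ _ _ (F T) ω)).aestronglyMeasurable.congr ?_
    rw [uIoc_of_le hT]
    filter_upwards [ae_restrict_mem measurableSet_Ioc] with u hu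
    simp [min_eq_left hu.2]
  refine (intervalIntegrable_const (c := K)).mono_fun' hmeas ?_
  rw [uIoc_of_le hT]
  filter_upwards [ae_restrict_mem measurableSet_Ioc] with u hu
  exact h u ⟨hu.1.le, hu.2⟩

end MeasureTheory

section BrownianWithDrift

open Real

variable {Ω : Type*} {mΩ : MeasurableSpace Ω}

noncomputable def brownianWithDrift (μ B : ℝ → Ω → ℝ) (σ t : ℝ) (ω : Ω) : ℝ :=
  (∫ u in (0 : ℝ)..t, μ u ω) + σ * B t ω

variable {P : Measure Ω} {F : Filtration ℝ mΩ} {B μ : ℝ → Ω → ℝ} {σ K : ℝ}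

lemma measurable_brownianWithDrift (hμ : IsStronglyProgressive F μ) (hB : Adapted F B) {t : ℝ}
    (ht : 0 ≤ t) : Measurable[F t] (brownianWithDrift μ B σ t) :=
  (hμ.stronglyMeasurable_intervalIntegral ht).measurable.add ((hB t).const_mul σ)

lemma continuousOn_brownianWithDrift {ω : Ω} (hint : IntervalIntegrable (μ · ω) volume 0 1)
    (hB : Continuous (B · ω)) :
    ContinuousOn (brownianWithDrift μ B σ · ω) (Icc 0 1) := by
  have h := intervalIntegral.continuousOn_primitive_interval' hint left_mem_uIcc
  rw [uIcc_of_le zero_le_one] at h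
  exact h.add (continuous_const.mul hB).continuousOn

lemma sub_le_brownianWithDrift_sub {ω : Ω} (hint : IntervalIntegrable (μ · ω) volume 0 1)
    (hbound : ∀ t ∈ Icc (0 : ℝ) 1, |μ t ω| ≤ K) {s : ℝ} (hs : s ∈ Icc (0 : ℝ) 1) :
    σ * (B 1 ω - B s ω) - K * (1 - s) ≤
      brownianWithDrift μ B σ 1 ω - brownianWithDrift μ B σ s ω := by
  have h_drift : |∫ u in s..1, μ u ω| ≤ K * (1 - s) := by
    have h := intervalIntegral.norm_integral_le_of_norm_le_const (a := s) (b := 1) (C := K)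
      (f := (μ · ω)) fun u hu => by
        rw [uIoc_of_le hs.2] at hu
        exact hbound u ⟨hs.1.trans hu.1.le, hu.2⟩
    rwa [abs_of_nonneg (sub_nonneg.2 hs.2)] at h
  have h_split : brownianWithDrift μ B σ 1 ω - brownianWithDrift μ B σ s ω =
      (∫ u in s..1, μ u ω) + σ * (B 1 ω - B s ω) := by
    rw [← intervalIntegral.integral_interval_sub_left hint
      (hint.mono_set (uIcc_subset_uIcc_left (by rwa [uIcc_of_le zero_le_one])))]
    simp only [brownianWithDrift]
    ring
  linarith [neg_abs_le (∫ u in s..1, μ u ω)]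

lemma mul_measure_le_measure_inter_lt_brownianWithDrift_one [IsProbabilityMeasure P]
    (hσ : 0 < σ) (hK : 0 ≤ K)
    (hμ : IsStronglyProgressive F μ) (hB : Adapted F B)
    (hdrift : ∀ᵐ ω ∂P, ∀ t ∈ Icc (0 : ℝ) 1, |μ t ω| ≤ K) {s : ℝ} (hs : s ∈ Icc (0 : ℝ) 1)
    (hlaw : P.map (fun ω => B 1 ω - B s ω) = gaussianReal 0 (1 - s).toNNReal)
    (hindep : Indep (MeasurableSpace.comap (fun ω => B 1 ω - B s ω) inferInstance) (F s) P)
    {A : Set Ω} (hA : MeasurableSet[F s] A) {x : ℝ}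
    (hAx : A ⊆ {ω | x < brownianWithDrift μ B σ s ω}) :
    ENNReal.ofReal (1 / 2 - K / (σ * √(2 * π))) * P A ≤
      P (A ∩ {ω | x < brownianWithDrift μ B σ 1 ω}) := by
  have hδ : 0 ≤ K / (σ * √(2 * π)) := by positivity
  rcases hs.2.eq_or_lt with rfl | hs1
  · rw [inter_eq_left.2 hAx]
    exact mul_le_of_le_one_left' (ENNReal.ofReal_le_one.2 (by linarith))
  set G : Set Ω := {ω | x < brownianWithDrift μ B σ 1 ω}
  have hv : 0 < 1 - s := sub_pos.2 hs1
  set a := K * (1 - s) / σ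
  set T : Set Ω := (fun ω => B 1 ω - B s ω) ⁻¹' Iic a
  -- A path that is above `x` at time `s` but not at time `1` has a Brownian increment below `a`.
  have h_exit : (A \ G : Set Ω) ≤ᵐ[P] (A ∩ T : Set Ω) := by
    filter_upwards [hdrift] with ω hω ⟨hωA, hωG⟩
    have h_incr := sub_le_brownianWithDrift_sub (σ := σ) (B := B)
      (hμ.intervalIntegrable_of_abs_le zero_le_one hω) hω hs
    have hωs := hAx hωA
    simp only [G, mem_ofPred_eq, not_lt] at hωs hωG
    refine ⟨hωA, ?_⟩
    show B 1 ω - B s ω ≤ a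
    rw [le_div_iff₀ hσ]
    linarith
  have h_indep : P (A ∩ T) = P T * P A := by
    rw [inter_comm]
    exact (Indep_iff _ _ _).1 hindep T A ⟨Iic a, measurableSet_Iic, rfl⟩ hA
  have h_gauss : P T ≤ ENNReal.ofReal (1 / 2 + K / (σ * √(2 * π))) := by
    have hΔ : Measurable fun ω => B 1 ω - B s ω :=
      ((hB 1).mono (F.le 1) le_rfl).sub ((hB s).mono (F.le s) le_rfl)
    rw [← Measure.map_apply hΔ measurableSet_Iic, hlaw]
    refine (gaussianReal_Iic_le (by simpa using hv) (by positivity)).trans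
      (ENNReal.ofReal_le_ofReal (add_le_add le_rfl ?_))
    rw [Real.coe_toNNReal _ hv.le, sqrt_mul' _ hv.le]
    calc a / (√(2 * π) * √(1 - s)) = K * √(1 - s) / (σ * √(2 * π)) := by
          simp only [a]
          field_simp
          rw [sq_sqrt hv.le]
      _ ≤ K / (σ * √(2 * π)) := by
          gcongr
          exact mul_le_of_le_one_right hK (sqrt_le_one.2 (by linarith [hs.1]))
  calc ENNReal.ofReal (1 / 2 - K / (σ * √(2 * π))) * P A
      = (1 - ENNReal.ofReal (1 / 2 + K / (σ * √(2 * π)))) * P A := by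
        rw [← ENNReal.ofReal_one, ← ENNReal.ofReal_sub _ (by positivity)]
        ring_nf
    _ ≤ P (A ∩ G) := one_sub_mul_measure_le_measure_inter <|
        calc P (A \ G) ≤ P (A ∩ T) := measure_mono_ae h_exit
          _ = P T * P A := h_indep
          _ ≤ _ := by gcongr

lemma mul_measure_iUnion_lt_brownianWithDrift_le [IsProbabilityMeasure P] (hσ : 0 < σ) (hK : 0 ≤ K)
    (hμ : IsStronglyProgressive F μ) (hB : Adapted F B)
    (hdrift : ∀ᵐ ω ∂P, ∀ t ∈ Icc (0 : ℝ) 1, |μ t ω| ≤ K)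
    (hlaw : ∀ s ∈ Icc (0 : ℝ) 1,
      P.map (fun ω => B 1 ω - B s ω) = gaussianReal 0 (1 - s).toNNReal)
    (hindep : ∀ s ∈ Icc (0 : ℝ) 1,
      Indep (MeasurableSpace.comap (fun ω => B 1 ω - B s ω) inferInstance) (F s) P)
    {t : ℕ → ℝ} (ht : Monotone t) (ht01 : ∀ k, t k ∈ Icc (0 : ℝ) 1) (x : ℝ) :
    ENNReal.ofReal (1 / 2 - K / (σ * √(2 * π))) *
        P (⋃ k, {ω | x < brownianWithDrift μ B σ (t k) ω}) ≤
      P {ω | x < brownianWithDrift μ B σ 1 ω} := by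
  have hS : ∀ k, MeasurableSet[F (t k)] {ω | x < brownianWithDrift μ B σ (t k) ω} := fun k =>
    measurable_brownianWithDrift hμ hB (ht01 k).1 measurableSet_Ioi
  refine mul_measure_iUnion_le_of_disjointed (fun k => F.le _ _ (hS k))
    (F.le 1 _ (measurable_brownianWithDrift hμ hB zero_le_one measurableSet_Ioi)) fun k => ?_
  exact mul_measure_le_measure_inter_lt_brownianWithDrift_one hσ hK hμ hB hdrift (ht01 k)
    (hlaw _ (ht01 k)) (hindep _ (ht01 k)) (F.measurableSet_disjointed ht hS k)
    (disjointed_subset _ _)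

end BrownianWithDrift

noncomputable def dyadicGrid (n k : ℕ) : ℝ := min (k / 2 ^ n) 1

lemma dyadicGrid_mem_Icc (n k : ℕ) : dyadicGrid n k ∈ Icc (0 : ℝ) 1 :=
  ⟨le_min (by positivity) zero_le_one, min_le_right _ _⟩

lemma monotone_dyadicGrid (n : ℕ) : Monotone (dyadicGrid n) := fun i j h =>
  min_le_min_right _ (by gcongr)

lemma dyadicGrid_succ_two_mul (n k : ℕ) : dyadicGrid (n + 1) (2 * k) = dyadicGrid n k := by
  simp only [dyadicGrid, Nat.cast_mul, Nat.cast_ofNat, pow_succ]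
  congr 1
  field_simp

lemma tendsto_dyadicGrid_floor {t : ℝ} (ht : t ∈ Icc (0 : ℝ) 1) :
    Tendsto (fun n => dyadicGrid n ⌊t * 2 ^ n⌋₊) atTop (𝓝 t) := by
  have h := (tendsto_nat_floor_mul_div_atTop ht.1).comp
    (tendsto_pow_atTop_atTop_of_one_lt (one_lt_two (α := ℝ)))
  refine h.congr fun n => (min_eq_left ?_).symm
  have h_floor : (⌊t * 2 ^ n⌋₊ : ℝ) ≤ t * 2 ^ n := Nat.floor_le (mul_nonneg ht.1 (by positivity))
  exact (div_le_of_le_mul₀ (by positivity) ht.1 h_floor).trans ht.2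

lemma exists_lt_dyadicGrid_of_lt_sSup {g : ℝ → ℝ} (hg : ContinuousOn g (Icc 0 1)) {x : ℝ}
    (hx : x < sSup (g '' Icc 0 1)) : ∃ n k, x < g (dyadicGrid n k) := by
  obtain ⟨t, ht, hgt⟩ :=
    (isCompact_Icc.image_of_continuousOn hg).sSup_mem ((nonempty_Icc.2 zero_le_one).image g)
  rw [← hgt] at hx
  have h := (hg t ht).tendsto.comp (tendsto_nhdsWithin_iff.2
    ⟨tendsto_dyadicGrid_floor ht, Eventually.of_forall fun n => dyadicGrid_mem_Icc _ _⟩)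
  obtain ⟨n, hn⟩ := (h.eventually (lt_mem_nhds hx)).exists
  exact ⟨n, _, hn⟩

theorem stmt14_general (Ω : Type) [mΩ : MeasurableSpace Ω] (P : Measure Ω) [IsProbabilityMeasure P]
    (F : Filtration ℝ mΩ) (B μ : ℝ → Ω → ℝ) (σ c : ℝ) (hc : 0 < c) (hcσ : c ≤ σ)
    (hBcont : ∀ ω, Continuous fun t => B t ω)
    (hBadapted : Adapted F B)
    (hBlaw : ∀ s t : ℝ, 0 ≤ s → s ≤ t → t ≤ 1 →
      Measure.map (fun ω => B t ω - B s ω) P = gaussianReal 0 ((t - s).toNNReal))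
    (hBindep : ∀ s t : ℝ, 0 ≤ s → s ≤ t → t ≤ 1 →
      Indep (MeasurableSpace.comap (fun ω => B t ω - B s ω)
        (inferInstance : MeasurableSpace ℝ)) (F s) P)
    (hμ : ProgMeasurable F μ)
    (ε : ℝ)
    (hdrift : ∀ᵐ ω ∂P, ∀ t ∈ Icc (0 : ℝ) 1, |μ t ω| ≤ Real.sqrt ε)
    (x : ℝ) :
    ENNReal.ofReal (1 / 2 - Real.sqrt ε / (c * Real.sqrt (2 * Real.pi))) *
        P {ω | x <
          sSup ((fun t => (∫ u in (0 : ℝ)..t, μ u ω) + σ * B t ω) '' Icc (0 : ℝ) 1)}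
      ≤ P {ω | x < (∫ u in (0 : ℝ)..1, μ u ω) + σ * B 1 ω} := by
  have hσ : 0 < σ := hc.trans_le hcσ
  set E : ℕ → Set Ω := fun n => ⋃ k, {ω | x < brownianWithDrift μ B σ (dyadicGrid n k) ω}
  have hE : Monotone E := monotone_nat_of_le_succ fun n => iUnion_subset fun k => by
    rw [← dyadicGrid_succ_two_mul]
    exact subset_iUnion_of_subset (2 * k) subset_rfl
  have h_sup : {ω | x < sSup ((brownianWithDrift μ B σ · ω) '' Icc 0 1)} ≤ᵐ[P] ⋃ n, E n := by
    filter_upwards [hdrift] with ω hω hωx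
    obtain ⟨n, k, hnk⟩ := exists_lt_dyadicGrid_of_lt_sSup
      (continuousOn_brownianWithDrift (hμ.intervalIntegrable_of_abs_le zero_le_one hω) (hBcont ω))
      hωx
    exact mem_iUnion₂.2 ⟨n, k, hnk⟩
  have h_rate : ENNReal.ofReal (1 / 2 - √ε / (c * √(2 * Real.pi))) ≤
      ENNReal.ofReal (1 / 2 - √ε / (σ * √(2 * Real.pi))) := by
    gcongr
  calc _ ≤ ENNReal.ofReal (1 / 2 - √ε / (σ * √(2 * Real.pi))) * P (⋃ n, E n) :=
        mul_le_mul' h_rate (measure_mono_ae h_sup)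
    _ = ⨆ n, ENNReal.ofReal (1 / 2 - √ε / (σ * √(2 * Real.pi))) * P (E n) := by
        rw [hE.measure_iUnion, ENNReal.mul_iSup]
    _ ≤ _ := iSup_le fun n => mul_measure_iUnion_lt_brownianWithDrift_le hσ (Real.sqrt_nonneg ε)
        hμ hBadapted hdrift
        (fun s hs => hBlaw s 1 hs.1 hs.2 le_rfl) (fun s hs => hBindep s 1 hs.1 hs.2 le_rfl)
        (monotone_dyadicGrid n) (dyadicGrid_mem_Icc n) x

/-- Second step in the proof of the paper's Lemma 5.2 (constant diffusion coefficient):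
if `σ ≥ c > 0` and `|μ_t| ≤ √ε` a.s. on `[0,1]`, then for every `x ≥ 0`,
`P(X₁ > x) ≥ (1/2 − √ε/(c√(2π)))·P(sup_{t∈[0,1]} X_t > x)`,
where `X_t = ∫₀^t μ_u du + σ B_t`. -/
theorem stmt14 (Ω : Type) [mΩ : MeasurableSpace Ω] (P : Measure Ω) [IsProbabilityMeasure P]
    (F : Filtration ℝ mΩ) (B μ : ℝ → Ω → ℝ) (σ c : ℝ) (hc : 0 < c) (hcσ : c ≤ σ)
    (hBcont : ∀ ω, Continuous fun t => B t ω)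
    (hB0 : ∀ ω, B 0 ω = 0)
    (hBadapted : Adapted F B)
    (hBlaw : ∀ s t : ℝ, 0 ≤ s → s ≤ t → t ≤ 1 →
      Measure.map (fun ω => B t ω - B s ω) P = gaussianReal 0 ((t - s).toNNReal))
    (hBindep : ∀ s t : ℝ, 0 ≤ s → s ≤ t → t ≤ 1 →
      Indep (MeasurableSpace.comap (fun ω => B t ω - B s ω)
        (inferInstance : MeasurableSpace ℝ)) (F s) P)
    (hμ : ProgMeasurable F μ)
    (ε : ℝ) (hε : 0 ≤ ε)
    (hdrift : ∀ᵐ ω ∂P, ∀ t ∈ Icc (0 : ℝ) 1, |μ t ω| ≤ Real.sqrt ε)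
    (x : ℝ) (hx : 0 ≤ x) :
    ENNReal.ofReal (1 / 2 - Real.sqrt ε / (c * Real.sqrt (2 * Real.pi))) *
        P {ω | x <
          sSup ((fun t => (∫ u in (0 : ℝ)..t, μ u ω) + σ * B t ω) '' Icc (0 : ℝ) 1)}
      ≤ P {ω | x < (∫ u in (0 : ℝ)..1, μ u ω) + σ * B 1 ω} :=
  stmt14_general Ω (mΩ := mΩ) P F B μ σ c hc hcσ hBcont hBadapted hBlaw hBindep hμ ε hdrift x
end

section
/- Let ξ be a real random variable with law N(m, σ²), σ > 0, and let x ∈ ℝ. Then sup_{p ∈ ℝ} E[(p − x − ξ) · 1_{ξ > p}] > 0 if and only if x < 0. Moreover, if x ≥ 0 then E[(p − x − ξ) · 1_{ξ > p}] < 0 for every p ∈ ℝ. -/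
/-!
The expected profit is `-x · P(ξ > p) - E[(ξ - p)⁺]`, and the stop-loss term `E[(ξ - p)⁺]` is
positive; this gives the sign for `x ≥ 0` and the upper bound `|x|`. For `x = -c < 0` one needs
the mean excess `E[(ξ - p)⁺] / P(ξ > p)` to drop below `c` for large `p`. Splitting at `p + c/2`,
the near part is at most `(c/2) · P(ξ > p)`, while `∫ₐ^∞ (t - m) φ(t) dt = σ² φ(a)` bounds the far
part by `σ² φ(p + c/2)`. The Gaussian ratio `φ(p + c/2) / φ(p + c/4)` tends to `0`, and
`P(ξ > p) ≥ (c/4) φ(p + c/4)`, so the far part is eventually below `(c/2) · P(ξ > p)` as well.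
-/

open MeasureTheory ProbabilityTheory Filter Set
open Real Topology
open scoped NNReal ENNReal

section GaussianDensity

variable {m : ℝ} {v : ℝ≥0}

lemma hasDerivAt_gaussianPDFReal (hv : v ≠ 0) (t : ℝ) :
    HasDerivAt (gaussianPDFReal m v) (-((t - m) / v) * gaussianPDFReal m v t) t := by
  have hv' : (v : ℝ) ≠ 0 := by exact_mod_cast hv
  have h := (((((hasDerivAt_id t).sub_const m).pow 2).neg.div_const (2 * v)).exp).const_mul
    (√(2 * π * v))⁻¹
  refine h.congr_deriv ?_
  simp only [gaussianPDFReal, id, Pi.neg_apply, Pi.pow_apply]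
  field_simp
  ring

lemma gaussianPDFReal_antitoneOn : AntitoneOn (gaussianPDFReal m v) (Ici m) := by
  intro s hs t _ hst
  simp only [gaussianPDFReal]
  gcongr
  exact sub_nonneg.2 hs

lemma tendsto_gaussianPDFReal_atTop (hv : v ≠ 0) :
    Tendsto (gaussianPDFReal m v) atTop (𝓝 0) := by
  have h : Tendsto (fun t => -(t - m) ^ 2 / (2 * v)) atTop atBot := by
    refine Tendsto.atBot_div_const (by positivity) (tendsto_neg_atTop_atBot.comp ?_)
    exact (tendsto_pow_atTop two_ne_zero).comp (tendsto_atTop_add_const_right _ (-m) tendsto_id)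
  rw [gaussianPDFReal_def, ← mul_zero (√(2 * π * v))⁻¹]
  exact (tendsto_exp_atBot.comp h).const_mul _

lemma integrable_sub_mul_gaussianPDFReal (hv : v ≠ 0) (p : ℝ) :
    Integrable (fun t => (t - p) * gaussianPDFReal m v t) := by
  have hb : (0 : ℝ) < (2 * v : ℝ)⁻¹ := by positivity
  have h := (((integrable_mul_exp_neg_mul_sq hb).comp_sub_right m).const_mul (√(2 * π * v))⁻¹).add
    ((integrable_gaussianPDFReal m v).const_mul (m - p))
  refine h.congr (.of_forall fun t => ?_)
  simp only [Pi.add_apply, gaussianPDFReal, div_eq_inv_mul, mul_neg, neg_mul]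
  ring

lemma integral_Ioi_sub_mul_gaussianPDFReal (hv : v ≠ 0) (a : ℝ) :
    ∫ t in Ioi a, (t - m) * gaussianPDFReal m v t = v * gaussianPDFReal m v a := by
  have hv' : (v : ℝ) ≠ 0 := by exact_mod_cast hv
  have hderiv : ∀ t ∈ Ici a, HasDerivAt (fun t => -(v : ℝ) * gaussianPDFReal m v t)
      ((t - m) * gaussianPDFReal m v t) t := fun t _ =>
    ((hasDerivAt_gaussianPDFReal hv t).const_mul _).congr_deriv (by field_simp)
  have hlim := (tendsto_gaussianPDFReal_atTop (m := m) hv).const_mul (-(v : ℝ))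
  rw [mul_zero] at hlim
  rw [integral_Ioi_of_hasDerivAt_of_tendsto' hderiv
    (integrable_sub_mul_gaussianPDFReal hv m).integrableOn hlim]
  ring

lemma tendsto_gaussianPDFReal_add_div_gaussianPDFReal_add (hv : v ≠ 0) {s t : ℝ} (hst : s < t) :
    Tendsto (fun p => gaussianPDFReal m v (p + t) / gaussianPDFReal m v (p + s)) atTop (𝓝 0) := by
  have hv' : (v : ℝ) ≠ 0 := by exact_mod_cast hv
  have hslope : -(t - s) / v < 0 := div_neg_of_neg_of_pos (by linarith) (by positivity)
  have hexp : Tendsto (fun p => -(t - s) / v * p + (t - s) * (2 * m - s - t) / (2 * v))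
      atTop atBot :=
    tendsto_atBot_add_const_right _ _ (tendsto_id.const_mul_atTop_of_neg hslope)
  refine (tendsto_exp_atBot.comp hexp).congr fun p => ?_
  rw [Function.comp_apply, gaussianPDFReal, gaussianPDFReal, mul_div_mul_left _ _ (by positivity),
    ← exp_sub]
  congr 1
  field_simp
  ring

noncomputable def gaussianTail (m : ℝ) (v : ℝ≥0) (p : ℝ) : ℝ :=
  ∫ t in Ioi p, gaussianPDFReal m v t

noncomputable def gaussianStopLoss (m : ℝ) (v : ℝ≥0) (p : ℝ) : ℝ :=
  ∫ t in Ioi p, (t - p) * gaussianPDFReal m v t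

lemma gaussianTail_nonneg (m : ℝ) (v : ℝ≥0) (p : ℝ) : 0 ≤ gaussianTail m v p :=
  setIntegral_nonneg measurableSet_Ioi fun t _ => gaussianPDFReal_nonneg m v t

lemma gaussianTail_le_one (hv : v ≠ 0) (p : ℝ) : gaussianTail m v p ≤ 1 :=
  (setIntegral_le_integral (integrable_gaussianPDFReal m v)
    (.of_forall (gaussianPDFReal_nonneg m v))).trans_eq (integral_gaussianPDFReal_eq_one m hv)

lemma mul_gaussianPDFReal_add_le_gaussianTail {p ε : ℝ} (hp : m ≤ p) (hε : 0 ≤ ε) :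
    ε * gaussianPDFReal m v (p + ε) ≤ gaussianTail m v p := by
  have hpdf : ∀ t ∈ Ioc p (p + ε), gaussianPDFReal m v (p + ε) ≤ gaussianPDFReal m v t :=
    fun t ht => gaussianPDFReal_antitoneOn (hp.trans ht.1.le) (mem_Ici.2 (by linarith)) ht.2
  calc ε * gaussianPDFReal m v (p + ε)
      ≤ ∫ t in Ioc p (p + ε), gaussianPDFReal m v t := by
        simpa [volume_real_Ioc_of_le (le_add_of_nonneg_right hε), mul_comm] using
          setIntegral_ge_of_const_le_real measurableSet_Ioc (by simp) hpdf
            (integrable_gaussianPDFReal m v).integrableOn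
    _ ≤ gaussianTail m v p :=
        setIntegral_mono_set (integrable_gaussianPDFReal m v).integrableOn
          (.of_forall (gaussianPDFReal_nonneg m v)) Ioc_subset_Ioi_self.eventuallyLE

lemma gaussianStopLoss_pos (hv : v ≠ 0) (p : ℝ) : 0 < gaussianStopLoss m v p := by
  have hpos : ∀ t ∈ Ioi p, 0 < (t - p) * gaussianPDFReal m v t :=
    fun t ht => mul_pos (sub_pos.2 ht) (gaussianPDFReal_pos m v t hv)
  rw [gaussianStopLoss, setIntegral_pos_iff_support_of_nonneg_ae
    ((ae_restrict_iff' measurableSet_Ioi).2 (.of_forall fun t ht => (hpos t ht).le))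
    (integrable_sub_mul_gaussianPDFReal hv p).integrableOn]
  calc (0 : ℝ≥0∞) < volume (Ioi p) := by simp
    _ ≤ volume ((Function.support fun t => (t - p) * gaussianPDFReal m v t) ∩ Ioi p) :=
      measure_mono fun t ht => ⟨(hpos t ht).ne', ht⟩

lemma gaussianStopLoss_le (hv : v ≠ 0) {p δ : ℝ} (hp : m ≤ p) (hδ : 0 ≤ δ) :
    gaussianStopLoss m v p ≤ δ * gaussianTail m v p + v * gaussianPDFReal m v (p + δ) := by
  have hint := integrable_sub_mul_gaussianPDFReal (m := m) hv p
  have hnear : ∫ t in Ioc p (p + δ), (t - p) * gaussianPDFReal m v t ≤ δ * gaussianTail m v p :=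
    calc ∫ t in Ioc p (p + δ), (t - p) * gaussianPDFReal m v t
        ≤ ∫ t in Ioc p (p + δ), δ * gaussianPDFReal m v t :=
          setIntegral_mono_on hint.integrableOn
            ((integrable_gaussianPDFReal m v).const_mul δ).integrableOn measurableSet_Ioc
            fun t ht =>
              mul_le_mul_of_nonneg_right (by linarith [ht.2]) (gaussianPDFReal_nonneg m v t)
      _ ≤ ∫ t in Ioi p, δ * gaussianPDFReal m v t :=
          setIntegral_mono_set ((integrable_gaussianPDFReal m v).const_mul δ).integrableOn
            (.of_forall fun t => mul_nonneg hδ (gaussianPDFReal_nonneg m v t))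
            Ioc_subset_Ioi_self.eventuallyLE
      _ = δ * gaussianTail m v p := integral_const_mul δ _
  have hfar : ∫ t in Ioi (p + δ), (t - p) * gaussianPDFReal m v t
      ≤ v * gaussianPDFReal m v (p + δ) :=
    calc ∫ t in Ioi (p + δ), (t - p) * gaussianPDFReal m v t
        ≤ ∫ t in Ioi (p + δ), (t - m) * gaussianPDFReal m v t :=
          setIntegral_mono_on hint.integrableOn
            (integrable_sub_mul_gaussianPDFReal hv m).integrableOn measurableSet_Ioi fun t _ =>
              mul_le_mul_of_nonneg_right (by linarith) (gaussianPDFReal_nonneg m v t)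
      _ = v * gaussianPDFReal m v (p + δ) := integral_Ioi_sub_mul_gaussianPDFReal hv (p + δ)
  rw [gaussianStopLoss, ← Ioc_union_Ioi_eq_Ioi (le_add_of_nonneg_right hδ),
    setIntegral_union (Ioc_disjoint_Ioi le_rfl) measurableSet_Ioi hint.integrableOn
      hint.integrableOn]
  exact add_le_add hnear hfar

lemma exists_gaussianStopLoss_lt_mul_gaussianTail (hv : v ≠ 0) {c : ℝ} (hc : 0 < c) :
    ∃ p, gaussianStopLoss m v p < c * gaussianTail m v p := by
  have hv' : (0 : ℝ) < v := by positivity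
  have hratio := (tendsto_gaussianPDFReal_add_div_gaussianPDFReal_add (m := m) hv
    (show c / 4 < c / 2 by linarith)).eventually (gt_mem_nhds (by positivity : 0 < c ^ 2 / (8 * v)))
  obtain ⟨p, hp, hratio⟩ := ((eventually_ge_atTop m).and hratio).exists
  rw [div_lt_iff₀ (gaussianPDFReal_pos m v _ hv)] at hratio
  refine ⟨p, ?_⟩
  calc gaussianStopLoss m v p
      ≤ c / 2 * gaussianTail m v p + v * gaussianPDFReal m v (p + c / 2) :=
        gaussianStopLoss_le hv hp (by positivity)
    _ < c / 2 * gaussianTail m v p + c / 2 * (c / 4 * gaussianPDFReal m v (p + c / 4)) := by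
        have := mul_lt_mul_of_pos_left hratio hv'
        field_simp at this ⊢
        linarith
    _ ≤ c * gaussianTail m v p := by
        linarith [mul_le_mul_of_nonneg_left
          (mul_gaussianPDFReal_add_le_gaussianTail (v := v) hp (by positivity : 0 ≤ c / 4))
          (by positivity : 0 ≤ c / 2)]

end GaussianDensity

lemma setIntegral_gaussianReal_eq_setIntegral_mul {m : ℝ} {v : ℝ≥0} (hv : v ≠ 0) (s : Set ℝ)
    (g : ℝ → ℝ) :
    ∫ t in s, g t ∂gaussianReal m v = ∫ t in s, gaussianPDFReal m v t * g t := by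
  rw [gaussianReal_of_var_ne_zero m hv, setIntegral_withDensity_eq_setIntegral_toReal_smul' s
    (measurable_gaussianPDF m v) (.of_forall fun _ => gaussianPDF_lt_top)]
  simp only [toReal_gaussianPDF, smul_eq_mul]

lemma setIntegral_sub_sub_eq_of_map_eq_gaussianReal {Ω : Type*} [MeasurableSpace Ω]
    {P : Measure Ω} {ξ : Ω → ℝ} {m : ℝ} {v : ℝ≥0} (hξ : AEMeasurable ξ P)
    (hlaw : P.map ξ = gaussianReal m v) (hv : v ≠ 0) (p x : ℝ) :
    ∫ ω in {ω | ξ ω > p}, (p - x - ξ ω) ∂P = -x * gaussianTail m v p - gaussianStopLoss m v p := by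
  calc ∫ ω in {ω | ξ ω > p}, (p - x - ξ ω) ∂P
      = ∫ t in Ioi p, (p - x - t) ∂P.map ξ :=
        (setIntegral_map measurableSet_Ioi (by fun_prop) hξ).symm
    _ = ∫ t in Ioi p, (-x * gaussianPDFReal m v t - (t - p) * gaussianPDFReal m v t) := by
        rw [hlaw, setIntegral_gaussianReal_eq_setIntegral_mul hv]
        congr with t
        ring
    _ = -x * gaussianTail m v p - gaussianStopLoss m v p := by
        rw [integral_sub ((integrable_gaussianPDFReal m v).const_mul _).integrableOn
          (integrable_sub_mul_gaussianPDFReal hv p).integrableOn, integral_const_mul]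
        rfl

theorem stmt15_general (Ω : Type) [MeasurableSpace Ω] (P : Measure Ω)
    (ξ : Ω → ℝ) (hξ : Measurable ξ) (m σ : ℝ) (hσ : 0 < σ)
    (hlaw : Measure.map ξ P = gaussianReal m ((σ ^ 2).toNNReal)) (x : ℝ) :
    BddAbove (Set.range fun p => ∫ ω in {ω | ξ ω > p}, (p - x - ξ ω) ∂P) ∧
    (0 < sSup (Set.range fun p => ∫ ω in {ω | ξ ω > p}, (p - x - ξ ω) ∂P) ↔ x < 0) ∧
    (0 ≤ x → ∀ p : ℝ, (∫ ω in {ω | ξ ω > p}, (p - x - ξ ω) ∂P) < 0) := by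
  have hv : (σ ^ 2).toNNReal ≠ 0 := (Real.toNNReal_pos.2 (by positivity)).ne'
  simp only [setIntegral_sub_sub_eq_of_map_eq_gaussianReal hξ.aemeasurable hlaw hv]
  set v := (σ ^ 2).toNNReal
  have hneg (hx : 0 ≤ x) (p : ℝ) : -x * gaussianTail m v p - gaussianStopLoss m v p < 0 := by
    linarith [mul_nonneg hx (gaussianTail_nonneg m v p), gaussianStopLoss_pos (m := m) hv p]
  have hbdd : BddAbove (range fun p => -x * gaussianTail m v p - gaussianStopLoss m v p) := by
    refine ⟨|x|, forall_mem_range.2 fun p => ?_⟩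
    linarith [mul_le_mul_of_nonneg_right (neg_le_abs x) (gaussianTail_nonneg m v p),
      mul_le_of_le_one_right (abs_nonneg x) (gaussianTail_le_one (m := m) hv p),
      gaussianStopLoss_pos (m := m) hv p]
  refine ⟨hbdd, ?_, hneg⟩
  rw [lt_csSup_iff hbdd (range_nonempty _), exists_range_iff]
  constructor
  · rintro ⟨p, hp⟩
    by_contra! hx
    exact (hneg hx p).not_gt hp
  · intro hx
    obtain ⟨p, hp⟩ := exists_gaussianStopLoss_lt_mul_gaussianTail (m := m) hv (neg_pos.2 hx)
    exact ⟨p, by linarith⟩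

/-- Sign characterization of the expected relative profit from a limit sell order
(underlying the paper's Lemma 6.2): for `ξ ~ N(m, σ²)` and `x ∈ ℝ`,
`sup_{p∈ℝ} E[(p − x − ξ)·1_{ξ > p}] > 0` iff `x < 0`; moreover if `x ≥ 0` then
`E[(p − x − ξ)·1_{ξ > p}] < 0` for every `p`. -/
theorem stmt15 (Ω : Type) [MeasurableSpace Ω] (P : Measure Ω) [IsProbabilityMeasure P]
    (ξ : Ω → ℝ) (hξ : Measurable ξ) (m σ : ℝ) (hσ : 0 < σ)
    (hlaw : Measure.map ξ P = gaussianReal m ((σ ^ 2).toNNReal)) (x : ℝ) :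
    BddAbove (Set.range fun p => ∫ ω in {ω | ξ ω > p}, (p - x - ξ ω) ∂P) ∧
    (0 < sSup (Set.range fun p => ∫ ω in {ω | ξ ω > p}, (p - x - ξ ω) ∂P) ↔ x < 0) ∧
    (0 ≤ x → ∀ p : ℝ, (∫ ω in {ω | ξ ω > p}, (p - x - ξ ω) ∂P) < 0) :=
  stmt15_general Ω P ξ hξ m σ hσ hlaw x
end
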